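/- arXiv:1307.6917 — 11 statements merged into one kernel-verified Lean document; each statement's English description precedes it below -/
import Mathlib

section
/- Let Φ : [0,∞) → ℝ be a bounded, nonincreasing, nonnegative function with ∫_ℝ Φ(|x|) dx < ∞, and let φ : ℝ → ℂ be measurable with |φ(x)| ≤ Φ(|x|) for almost every x ∈ ℝ. Define h_k = √2 ∫_ℝ φ(u) · conj(φ(2u − k)) du for k ∈ ℤ. Then for every k ∈ ℤ, |h_k| ≤ C · Φ(|k|/3), where C = (3/√2) ∫_ℝ Φ(|u|) du. -/
open MeasureTheory

/-! At scale `|k|/3` one of the two factors of `h_k` is already small: if `|u| < |k|/3` then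
`|2u - k| ≥ |k| - 2|u| > |k|/3`. Hence, `Φ` being nonincreasing,
`Φ(|u|) Φ(|2u - k|) ≤ Φ(|k|/3) (Φ(|u|) + Φ(|2u - k|))`, and integrating the right-hand side
gives `(1 + 1/2) ∫ Φ(|u|) du` times `Φ(|k|/3)`. -/

lemma le_abs_or_le_abs_two_mul_sub (u k : ℝ) : |k| / 3 ≤ |u| ∨ |k| / 3 ≤ |2 * u - k| := by
  by_contra! hlt
  have : |k| ≤ |2 * u| + |2 * u - k| := by
    simpa using abs_sub (2 * u) (2 * u - k)
  rw [abs_mul, abs_two] at this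
  linarith [hlt.1, hlt.2]

lemma AntitoneOn.mul_le_mul_add {Φ : ℝ → ℝ} (hanti : AntitoneOn Φ (Set.Ici 0))
    (hnonneg : ∀ x ∈ Set.Ici (0 : ℝ), 0 ≤ Φ x) {t a b : ℝ} (ht : 0 ≤ t) (ha : 0 ≤ a)
    (hb : 0 ≤ b) (hab : t ≤ a ∨ t ≤ b) : Φ a * Φ b ≤ Φ t * (Φ a + Φ b) := by
  have hΦa := hnonneg a ha
  have hΦb := hnonneg b hb
  rcases hab with hta | htb
  · nlinarith [hanti (Set.mem_Ici.2 ht) (Set.mem_Ici.2 ha) hta]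
  · nlinarith [hanti (Set.mem_Ici.2 ht) (Set.mem_Ici.2 hb) htb]

namespace MeasureTheory

variable {E : Type*} [NormedAddCommGroup E]

lemma quasiMeasurePreserving_mul_sub {a : ℝ} (ha : a ≠ 0) (b : ℝ) :
    Measure.QuasiMeasurePreserving (fun u : ℝ => a * u - b) :=
  (measurePreserving_sub_right volume b).quasiMeasurePreserving.comp
    (Measure.quasiMeasurePreserving_smul volume ha)

lemma Integrable.comp_mul_sub {f : ℝ → E} (hf : Integrable f) {a : ℝ} (ha : a ≠ 0) (b : ℝ) :
    Integrable fun u => f (a * u - b) :=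
  (hf.comp_sub_right b).comp_mul_left' ha

lemma integral_comp_mul_sub [NormedSpace ℝ E] (f : ℝ → E) (a b : ℝ) :
    ∫ u, f (a * u - b) = |a⁻¹| • ∫ x, f x := by
  rw [Measure.integral_comp_mul_left (fun x => f (x - b)) a, integral_sub_right_eq_self]

end MeasureTheory

lemma norm_integral_mul_conj_comp_two_mul_sub_le {Φ : ℝ → ℝ} (hΦanti : AntitoneOn Φ (Set.Ici 0))
    (hΦnonneg : ∀ x ∈ Set.Ici (0 : ℝ), 0 ≤ Φ x) (hΦint : Integrable fun x : ℝ => Φ |x|)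
    {φ : ℝ → ℂ} (hφdom : ∀ᵐ x : ℝ, ‖φ x‖ ≤ Φ |x|) (k : ℝ) :
    ‖∫ u : ℝ, φ u * starRingEnd ℂ (φ (2 * u - k))‖ ≤
      3 / 2 * (∫ u : ℝ, Φ |u|) * Φ (|k| / 3) := by
  set c := Φ (|k| / 3)
  have hint₂ : Integrable fun u : ℝ => Φ |2 * u - k| :=
    hΦint.comp_mul_sub two_ne_zero k
  have hφdom₂ : ∀ᵐ u : ℝ, ‖φ (2 * u - k)‖ ≤ Φ |2 * u - k| :=
    (quasiMeasurePreserving_mul_sub two_ne_zero k).ae hφdom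
  have hpointwise : ∀ᵐ u : ℝ, ‖φ u * starRingEnd ℂ (φ (2 * u - k))‖ ≤
      c * (Φ |u| + Φ |2 * u - k|) := by
    filter_upwards [hφdom, hφdom₂] with u hu hu₂
    rw [norm_mul, RCLike.norm_conj]
    exact (mul_le_mul hu hu₂ (norm_nonneg _) (hΦnonneg _ (abs_nonneg u))).trans <|
      hΦanti.mul_le_mul_add hΦnonneg (by positivity) (abs_nonneg _) (abs_nonneg _)
        (le_abs_or_le_abs_two_mul_sub u k)
  calc ‖∫ u : ℝ, φ u * starRingEnd ℂ (φ (2 * u - k))‖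
      ≤ ∫ u : ℝ, c * (Φ |u| + Φ |2 * u - k|) :=
        norm_integral_le_of_norm_le ((hΦint.add hint₂).const_mul c) hpointwise
    _ = c * ((∫ u : ℝ, Φ |u|) + 1 / 2 * ∫ u : ℝ, Φ |u|) := by
        rw [integral_const_mul, integral_add hΦint hint₂,
          integral_comp_mul_sub (fun x => Φ |x|) 2 k]
        norm_num
    _ = 3 / 2 * (∫ u : ℝ, Φ |u|) * c := by ring

theorem filter_coefficient_decay_general
    (Φ : ℝ → ℝ)
    (hΦanti : AntitoneOn Φ (Set.Ici (0 : ℝ)))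
    (hΦnonneg : ∀ x ∈ Set.Ici (0 : ℝ), 0 ≤ Φ x)
    (hΦint : Integrable (fun x : ℝ => Φ |x|))
    (φ : ℝ → ℂ)
    (hφdom : ∀ᵐ x : ℝ, ‖φ x‖ ≤ Φ |x|)
    (h : ℤ → ℂ)
    (hh : ∀ k : ℤ, h k =
      (Real.sqrt 2 : ℂ) * ∫ u : ℝ, φ u * (starRingEnd ℂ) (φ (2 * u - k))) :
    ∀ k : ℤ, ‖h k‖ ≤ (3 / Real.sqrt 2 * ∫ u : ℝ, Φ |u|) * Φ (|(k : ℝ)| / 3) := by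
  intro k
  have hsqrt : 3 / Real.sqrt 2 = Real.sqrt 2 * (3 / 2) := by
    field_simp
    rw [Real.sq_sqrt zero_le_two]
  rw [hh k, norm_mul, Complex.norm_real, Real.norm_of_nonneg (Real.sqrt_nonneg 2), hsqrt,
    mul_assoc, mul_assoc]
  gcongr
  simpa [mul_assoc] using
    norm_integral_mul_conj_comp_two_mul_sub_le hΦanti hΦnonneg hΦint hφdom (k : ℝ)

/-- Filter-coefficient decay (from the proof of Lemma 2.1): if `|φ| ≤ Φ(|·|)` a.e. with
`Φ` bounded, nonincreasing, nonnegative and `∫ Φ(|x|) dx < ∞`, then the low-pass filter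
coefficients `h_k = √2 ∫ φ(u) conj(φ(2u − k)) du` satisfy
`|h_k| ≤ (3/√2 · ∫ Φ(|u|) du) · Φ(|k|/3)`. -/
theorem filter_coefficient_decay
    (Φ : ℝ → ℝ)
    (hΦbdd : ∃ M : ℝ, ∀ x ∈ Set.Ici (0 : ℝ), Φ x ≤ M)
    (hΦanti : AntitoneOn Φ (Set.Ici (0 : ℝ)))
    (hΦnonneg : ∀ x ∈ Set.Ici (0 : ℝ), 0 ≤ Φ x)
    (hΦint : Integrable (fun x : ℝ => Φ |x|))
    (φ : ℝ → ℂ) (hφmeas : Measurable φ)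
    (hφdom : ∀ᵐ x : ℝ, ‖φ x‖ ≤ Φ |x|)
    (h : ℤ → ℂ)
    (hh : ∀ k : ℤ, h k =
      (Real.sqrt 2 : ℂ) * ∫ u : ℝ, φ u * (starRingEnd ℂ) (φ (2 * u - k))) :
    ∀ k : ℤ, ‖h k‖ ≤ (3 / Real.sqrt 2 * ∫ u : ℝ, Φ |u|) * Φ (|(k : ℝ)| / 3) :=
  filter_coefficient_decay_general Φ hΦanti hΦnonneg hΦint φ hφdom h hh
end

section
/- Let Φ : [0,∞) → ℝ be a bounded, nonincreasing, nonnegative function with A := ∫_0^∞ Φ(v) dv < ∞. Then for every u ∈ ℝ, Σ_{k∈ℤ} Φ(|u − k|) · Φ(|k|/3) ≤ (D₁ + D₂) · Φ(|u|/4), where D₁ = 2(Φ(0) + A) and D₂ = Φ(0) + 6A. -/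
/-!
Both factors are controlled by `Φ(|u|/4)` on complementary ranges of `k`: since
`|u| ≤ |u - k| + |k|`, either `|u - k| ≥ |u|/4` or `|k|/3 ≥ |u|/4`, so by monotonicity
`Φ(|u-k|) Φ(|k|/3) ≤ (Φ(|u-k|) + Φ(|k|/3)) Φ(|u|/4)`. It remains to bound the two sums
`Σ_k Φ(|u-k|)` and `Σ_k Φ(|k|/3)`; for a nonincreasing `Φ`, a sum of `Φ` along a grid of
spacing `1/c` is at most `c ∫₀^∞ Φ` once the first few terms, each at most `Φ(0)`, are set
aside.
-/

open MeasureTheory Set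

variable {Φ : ℝ → ℝ}

theorem sum_range_comp_div_le_mul_integral (hanti : AntitoneOn Φ (Ici 0))
    (hnonneg : ∀ x ∈ Ici (0 : ℝ), 0 ≤ Φ x) (hint : IntegrableOn Φ (Ioi 0))
    {c : ℝ} (hc : 0 < c) (n : ℕ) :
    ∑ i ∈ Finset.range n, Φ ((i + 1 : ℕ) / c) ≤ c * ∫ v in Ioi 0, Φ v := by
  have hanti' : AntitoneOn (fun x => Φ (x / c)) (Icc 0 (0 + n)) := fun x hx y hy hxy =>
    hanti (div_nonneg hx.1 hc.le) (div_nonneg hy.1 hc.le) (by gcongr)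
  have h_interval_le : ∫ x in (0 : ℝ)..n / c, Φ x ≤ ∫ v in Ioi 0, Φ v := by
    rw [intervalIntegral.integral_of_le (by positivity)]
    exact setIntegral_mono_set hint
      (ae_restrict_of_forall_mem measurableSet_Ioi fun x hx =>
        hnonneg x (mem_Ici.2 (mem_Ioi.1 hx).le))
      Ioc_subset_Ioi_self.eventuallyLE
  calc ∑ i ∈ Finset.range n, Φ ((i + 1 : ℕ) / c)
      ≤ ∫ x in (0 : ℝ)..n, Φ (x / c) := by simpa using hanti'.sum_le_integral
    _ = c * ∫ x in (0 : ℝ)..n / c, Φ x := by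
      rw [intervalIntegral.integral_comp_div Φ hc.ne', zero_div, smul_eq_mul]
    _ ≤ c * ∫ v in Ioi 0, Φ v := mul_le_mul_of_nonneg_left h_interval_le hc.le

theorem summable_and_tsum_comp_le_of_shift (hanti : AntitoneOn Φ (Ici 0))
    (hnonneg : ∀ x ∈ Ici (0 : ℝ), 0 ≤ Φ x) (hint : IntegrableOn Φ (Ioi 0))
    (s : ℕ → ℝ) {c : ℝ} (hc : 0 < c) (p : ℕ) (hs0 : ∀ n, 0 ≤ s n)
    (hs : ∀ n : ℕ, (n + 1 : ℝ) / c ≤ s (n + p)) :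
    Summable (fun n => Φ (s n)) ∧
      ∑' n, Φ (s n) ≤ p * Φ 0 + c * ∫ v in Ioi 0, Φ v := by
  have hnn : ∀ n, 0 ≤ Φ (s n) := fun n => hnonneg _ (hs0 n)
  have hle_Φ_zero : ∀ n, Φ (s n) ≤ Φ 0 := fun n => hanti self_mem_Ici (hs0 n) (hs0 n)
  have htail_sums : ∀ N, ∑ i ∈ Finset.range N, Φ (s (i + p)) ≤ c * ∫ v in Ioi 0, Φ v :=
    fun N => (Finset.sum_le_sum fun i _ =>
      hanti (mem_Ici.2 (by positivity)) (hs0 _) (by exact_mod_cast hs i)).trans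
        (sum_range_comp_div_le_mul_integral hanti hnonneg hint hc N)
  have htail : Summable (fun n => Φ (s (n + p))) :=
    summable_of_sum_range_le (fun n => hnn _) htail_sums
  have hsum : Summable (fun n => Φ (s n)) := (summable_nat_add_iff p).1 htail
  refine ⟨hsum, ?_⟩
  have hhead : ∑ i ∈ Finset.range p, Φ (s i) ≤ p * Φ 0 := by
    simpa using Finset.sum_le_sum fun i (_ : i ∈ Finset.range p) => hle_Φ_zero i
  rw [← hsum.sum_add_tsum_nat_add p]
  linarith [Real.tsum_le_of_sum_range_le (fun n => hnn _) htail_sums]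

theorem summable_and_tsum_int_comp_le (hanti : AntitoneOn Φ (Ici 0))
    (hnonneg : ∀ x ∈ Ici (0 : ℝ), 0 ≤ Φ x) (hint : IntegrableOn Φ (Ioi 0))
    (s : ℤ → ℝ) {c : ℝ} (hc : 0 < c) (p : ℕ) (hs0 : ∀ k, 0 ≤ s k)
    (hpos : ∀ n : ℕ, (n + 1 : ℝ) / c ≤ s (n + p))
    (hneg : ∀ n : ℕ, (n + 1 : ℝ) / c ≤ s (-(n + 1))) :
    Summable (fun k => Φ (s k)) ∧
      ∑' k, Φ (s k) ≤ p * Φ 0 + 2 * c * ∫ v in Ioi 0, Φ v := by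
  obtain ⟨hsum_pos, htsum_pos⟩ := summable_and_tsum_comp_le_of_shift hanti hnonneg hint
    (fun n : ℕ => s n) hc p (fun n => hs0 n) (fun n => by push_cast; exact hpos n)
  obtain ⟨hsum_neg, htsum_neg⟩ := summable_and_tsum_comp_le_of_shift hanti hnonneg hint
    (fun n : ℕ => s (-(n + 1))) hc 0 (fun n => hs0 _) (fun n => by simpa using hneg n)
  refine ⟨.of_nat_of_neg_add_one (f := fun k => Φ (s k)) hsum_pos hsum_neg, ?_⟩
  rw [tsum_of_nat_of_neg_add_one (f := fun k => Φ (s k)) hsum_pos hsum_neg]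
  simp only [CharP.cast_eq_zero, zero_mul, zero_add] at htsum_neg
  linarith

theorem summable_and_tsum_comp_abs_sub_int_le (hanti : AntitoneOn Φ (Ici 0))
    (hnonneg : ∀ x ∈ Ici (0 : ℝ), 0 ≤ Φ x) (hint : IntegrableOn Φ (Ioi 0)) (u : ℝ) :
    Summable (fun k : ℤ => Φ |u - k|) ∧
      ∑' k : ℤ, Φ |u - k| ≤ 2 * Φ 0 + 2 * ∫ v in Ioi 0, Φ v := by
  -- after shifting `k` by `⌊u⌋` only `k = 0, 1` are within distance `1` of `Int.fract u`
  have hfract := Int.fract_lt_one u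
  have hfract0 := Int.fract_nonneg u
  obtain ⟨hsum, htsum⟩ := summable_and_tsum_int_comp_le hanti hnonneg hint
    (fun j : ℤ => |Int.fract u - j|) one_pos 2 (fun _ => abs_nonneg _)
    (fun n => le_abs.2 <| .inr <| by push_cast; linarith)
    (fun n => le_abs.2 <| .inl <| by push_cast; linarith)
  have hshift : ∀ j : ℤ, Φ |u - ((Equiv.addLeft ⌊u⌋ j : ℤ) : ℝ)| = Φ |Int.fract u - j| := by
    intro j
    rw [Int.fract, Equiv.coe_addLeft, Int.cast_add, sub_sub]
  rw [← (Equiv.addLeft ⌊u⌋).summable_iff, ← (Equiv.addLeft ⌊u⌋).tsum_eq]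
  simp only [Function.comp_def, hshift]
  exact ⟨hsum, by norm_num at htsum; linarith⟩

theorem summable_and_tsum_comp_abs_int_div_le (hanti : AntitoneOn Φ (Ici 0))
    (hnonneg : ∀ x ∈ Ici (0 : ℝ), 0 ≤ Φ x) (hint : IntegrableOn Φ (Ioi 0))
    {c : ℝ} (hc : 0 < c) :
    Summable (fun k : ℤ => Φ (|(k : ℝ)| / c)) ∧
      ∑' k : ℤ, Φ (|(k : ℝ)| / c) ≤ Φ 0 + 2 * c * ∫ v in Ioi 0, Φ v := by
  simpa using summable_and_tsum_int_comp_le hanti hnonneg hint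
    (fun k : ℤ => |(k : ℝ)| / c) hc 1 (fun _ => by positivity)
    (fun n => by gcongr; push_cast; exact le_abs_self _)
    (fun n => by gcongr; push_cast; rw [abs_neg]; exact le_abs_self _)

theorem mul_le_add_mul_of_antitoneOn (hanti : AntitoneOn Φ (Ici 0))
    (hnonneg : ∀ x ∈ Ici (0 : ℝ), 0 ≤ Φ x) {a b z : ℝ} (ha : 0 ≤ a) (hb : 0 ≤ b)
    (hz : 0 ≤ z) (h : z ≤ a ∨ z ≤ b) :
    Φ a * Φ b ≤ (Φ a + Φ b) * Φ z := by
  have hΦa := hnonneg a ha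
  have hΦb := hnonneg b hb
  rcases h with h | h
  · nlinarith [hanti hz ha h]
  · nlinarith [hanti hz hb h]

theorem abs_div_four_le_abs_sub_or_abs_div_three (u k : ℝ) :
    |u| / 4 ≤ |u - k| ∨ |u| / 4 ≤ |k| / 3 := by
  by_contra! h
  linarith [abs_sub_abs_le_abs_sub u k]

theorem discrete_convolution_estimate_general
    (Φ : ℝ → ℝ)
    (hΦanti : AntitoneOn Φ (Set.Ici (0 : ℝ)))
    (hΦnonneg : ∀ x ∈ Set.Ici (0 : ℝ), 0 ≤ Φ x)
    (hΦint : IntegrableOn Φ (Set.Ioi (0 : ℝ)))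
    (u : ℝ) :
    Summable (fun k : ℤ => Φ |u - (k : ℝ)| * Φ (|(k : ℝ)| / 3)) ∧
    ∑' k : ℤ, Φ |u - (k : ℝ)| * Φ (|(k : ℝ)| / 3) ≤
      (2 * (Φ 0 + ∫ v in Set.Ioi (0 : ℝ), Φ v) +
        (Φ 0 + 6 * ∫ v in Set.Ioi (0 : ℝ), Φ v)) * Φ (|u| / 4) := by
  obtain ⟨hsum₁, htsum₁⟩ := summable_and_tsum_comp_abs_sub_int_le hΦanti hΦnonneg hΦint u
  obtain ⟨hsum₂, htsum₂⟩ :=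
    summable_and_tsum_comp_abs_int_div_le hΦanti hΦnonneg hΦint (c := 3) (by norm_num)
  have hpointwise : ∀ k : ℤ, Φ |u - k| * Φ (|(k : ℝ)| / 3) ≤
      (Φ |u - k| + Φ (|(k : ℝ)| / 3)) * Φ (|u| / 4) := fun k =>
    mul_le_add_mul_of_antitoneOn hΦanti hΦnonneg (abs_nonneg _) (by positivity) (by positivity)
      (abs_div_four_le_abs_sub_or_abs_div_three u k)
  have hdom : Summable (fun k : ℤ => (Φ |u - k| + Φ (|(k : ℝ)| / 3)) * Φ (|u| / 4)) :=
    (hsum₁.add hsum₂).mul_right _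
  have hsum : Summable (fun k : ℤ => Φ |u - k| * Φ (|(k : ℝ)| / 3)) :=
    hdom.of_nonneg_of_le (fun k => mul_nonneg (hΦnonneg _ (mem_Ici.2 (abs_nonneg _)))
      (hΦnonneg _ (mem_Ici.2 (by positivity)))) hpointwise
  refine ⟨hsum, ?_⟩
  calc ∑' k : ℤ, Φ |u - k| * Φ (|(k : ℝ)| / 3)
      ≤ ∑' k : ℤ, (Φ |u - k| + Φ (|(k : ℝ)| / 3)) * Φ (|u| / 4) :=
        hsum.tsum_le_tsum hpointwise hdom
    _ = (∑' k : ℤ, Φ |u - k| + ∑' k : ℤ, Φ (|(k : ℝ)| / 3)) * Φ (|u| / 4) := by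
        rw [tsum_mul_right, hsum₁.tsum_add hsum₂]
    _ ≤ _ := mul_le_mul_of_nonneg_right (by linarith) (hΦnonneg _ (mem_Ici.2 (by positivity)))

/-- Discrete convolution estimate from the proof of Lemma 2.1: for a bounded,
nonincreasing, nonnegative `Φ` with `A = ∫₀^∞ Φ < ∞`, one has
`Σ_{k∈ℤ} Φ(|u−k|)·Φ(|k|/3) ≤ (D₁ + D₂)·Φ(|u|/4)` with `D₁ = 2(Φ(0)+A)`,
`D₂ = Φ(0)+6A` (in particular the sum is finite). -/
theorem discrete_convolution_estimate
    (Φ : ℝ → ℝ)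
    (hΦbdd : ∃ M : ℝ, ∀ x ∈ Set.Ici (0 : ℝ), Φ x ≤ M)
    (hΦanti : AntitoneOn Φ (Set.Ici (0 : ℝ)))
    (hΦnonneg : ∀ x ∈ Set.Ici (0 : ℝ), 0 ≤ Φ x)
    (hΦint : IntegrableOn Φ (Set.Ioi (0 : ℝ)))
    (u : ℝ) :
    Summable (fun k : ℤ => Φ |u - (k : ℝ)| * Φ (|(k : ℝ)| / 3)) ∧
    ∑' k : ℤ, Φ |u - (k : ℝ)| * Φ (|(k : ℝ)| / 3) ≤
      (2 * (Φ 0 + ∫ v in Set.Ioi (0 : ℝ), Φ v) +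
        (Φ 0 + 6 * ∫ v in Set.Ioi (0 : ℝ), Φ v)) * Φ (|u| / 4) :=
  discrete_convolution_estimate_general Φ hΦanti hΦnonneg hΦint u
end

section
/- Let Φ : [0,∞) → ℝ be a bounded, nonincreasing, nonnegative function with ∫_ℝ Φ(|x|) dx < ∞, and let φ ∈ L²(ℝ, ℂ) satisfy |φ(x)| ≤ Φ(|x|) for almost every x ∈ ℝ. Define h_k = √2 ∫_ℝ φ(u) · conj(φ(2u − k)) du, λ_k = (−1)^{1−k} · conj(h_{1−k}), and suppose ψ ∈ L²(ℝ, ℂ) satisfies ψ(x) = √2 Σ_{k∈ℤ} λ_k φ(2x − k) with convergence of the series in L²(ℝ). Then for almost every x ∈ ℝ, |ψ(x)| ≤ 3 (∫_ℝ Φ(|u|) du) (D₁ + D₂) · Φ(|2x − 1|/4), where D₁ = 2(Φ(0) + ∫_0^∞ Φ(v) dv) and D₂ = Φ(0) + 6 ∫_0^∞ Φ(v) dv. -/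
/-!
In `h_k = √2 ∫ φ(u) conj φ(2u - k) du` one of `|u|`, `|2u - k|` is at least `|k|/3`, and
`Φ a * Φ b ≤ Φ c * (Φ a + Φ b)` as soon as `c ≤ a` or `c ≤ b`; hence
`|h_k| ≤ (3/√2) ‖Φ(|·|)‖₁ Φ(|k|/3)`. The same splitting with `c = |2x - 1|/4` bounds
`|λ_k φ(2x - k)|` by `Φ(|2x - 1|/4)` times `Φ(|1 - k|/3) + Φ(|2x - k|)`, and each of these two
sums over `k` is controlled by `Φ 0` and `∫₀^∞ Φ`, comparing a decreasing function at separated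
points with its integral. The bound holds for every partial sum, so it passes to `ψ` along an
a.e. convergent subsequence.
-/

open MeasureTheory Filter Set

theorem quasiMeasurePreserving_two_mul_sub (c : ℝ) :
    Measure.QuasiMeasurePreserving (fun x : ℝ => 2 * x - c) :=
  (measurePreserving_sub_right volume c).quasiMeasurePreserving.comp
    (Measure.quasiMeasurePreserving_smul volume two_ne_zero)

section AntitoneKernel

variable {Φ : ℝ → ℝ}

theorem antitoneOn_mul_le_mul_add (hanti : AntitoneOn Φ (Ici 0))
    (hnonneg : ∀ x ∈ Ici (0 : ℝ), 0 ≤ Φ x) {a b c : ℝ} (ha : 0 ≤ a) (hb : 0 ≤ b) (hc : 0 ≤ c)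
    (h : c ≤ a ∨ c ≤ b) : Φ a * Φ b ≤ Φ c * (Φ a + Φ b) := by
  have := hnonneg a ha
  have := hnonneg b hb
  rcases h with hca | hcb
  · nlinarith [hanti hc ha hca]
  · nlinarith [hanti hc hb hcb]

/-- Each point `v i` is charged to the interval `(v i - δ, v i]`, on which `Φ ≥ Φ (v i)`;
these intervals are disjoint and lie in `(0, ∞)`. -/
theorem sum_le_inv_mul_integral_of_separated (hanti : AntitoneOn Φ (Ici 0))
    (hnonneg : ∀ x ∈ Ici (0 : ℝ), 0 ≤ Φ x) (hint : IntegrableOn Φ (Ioi 0))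
    {ι : Type*} (s : Finset ι) (v : ι → ℝ) {δ : ℝ} (hδ : 0 < δ) (hv : ∀ i ∈ s, δ ≤ v i)
    (hsep : ∀ i ∈ s, ∀ j ∈ s, i ≠ j → δ ≤ |v i - v j|) :
    ∑ i ∈ s, Φ (v i) ≤ δ⁻¹ * ∫ x in Ioi 0, Φ x := by
  have hsub : ∀ i ∈ s, Ioc (v i - δ) (v i) ⊆ Ioi 0 := fun i hi x hx =>
    lt_of_le_of_lt (sub_nonneg.2 (hv i hi)) hx.1
  have hterm : ∀ i ∈ s, δ * Φ (v i) ≤ ∫ x in Ioc (v i - δ) (v i), Φ x := by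
    intro i hi
    calc δ * Φ (v i) = ∫ _ in Ioc (v i - δ) (v i), Φ (v i) := by
          simp [measureReal_def, hδ.le]
      _ ≤ ∫ x in Ioc (v i - δ) (v i), Φ x :=
          setIntegral_mono_on (by simp) (hint.mono_set (hsub i hi)) measurableSet_Ioc
            fun x hx => hanti (mem_Ici.2 (hsub i hi hx).le) (hδ.le.trans (hv i hi)) hx.2
  have hdisj : (s : Set ι).PairwiseDisjoint fun i => Ioc (v i - δ) (v i) := by
    intro i hi j hj hij
    rw [Function.onFun, Ioc_disjoint_Ioc, max_sub_sub_right]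
    linarith [max_sub_min_eq_abs' (v i) (v j), hsep i hi j hj hij]
  calc ∑ i ∈ s, Φ (v i) = δ⁻¹ * ∑ i ∈ s, δ * Φ (v i) := by
        rw [← Finset.mul_sum, inv_mul_cancel_left₀ hδ.ne']
    _ ≤ δ⁻¹ * ∑ i ∈ s, ∫ x in Ioc (v i - δ) (v i), Φ x := by
        gcongr with i hi
        exact hterm i hi
    _ = δ⁻¹ * ∫ x in ⋃ i ∈ s, Ioc (v i - δ) (v i), Φ x := by
        rw [integral_biUnion_finset s (fun _ _ => measurableSet_Ioc) hdisj
          fun i hi => hint.mono_set (hsub i hi)]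
    _ ≤ δ⁻¹ * ∫ x in Ioi 0, Φ x := by
        refine mul_le_mul_of_nonneg_left (setIntegral_mono_set hint ?_
          (iUnion₂_subset hsub).eventuallyLE) (inv_nonneg.2 hδ.le)
        exact (ae_restrict_iff' measurableSet_Ioi).2
          (ae_of_all _ fun x hx => hnonneg x (mem_Ici.2 (le_of_lt hx)))

/-- Two points of `[0, δ)` are less than `δ` apart, so at most one term is not covered by
`sum_le_inv_mul_integral_of_separated`. -/
theorem sum_le_add_inv_mul_integral_of_separated (hanti : AntitoneOn Φ (Ici 0))
    (hnonneg : ∀ x ∈ Ici (0 : ℝ), 0 ≤ Φ x) (hint : IntegrableOn Φ (Ioi 0))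
    {ι : Type*} (s : Finset ι) (v : ι → ℝ) {δ : ℝ} (hδ : 0 < δ) (hv : ∀ i ∈ s, 0 ≤ v i)
    (hsep : ∀ i ∈ s, ∀ j ∈ s, i ≠ j → δ ≤ |v i - v j|) :
    ∑ i ∈ s, Φ (v i) ≤ Φ 0 + δ⁻¹ * ∫ x in Ioi 0, Φ x := by
  classical
  rw [← Finset.sum_filter_add_sum_filter_not s fun i => v i < δ]
  gcongr ?_ + ?_
  · have hcard : (s.filter fun i => v i < δ).card ≤ 1 := by
      refine Finset.card_le_one.2 fun i hi j hj => by_contra fun hij => ?_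
      rw [Finset.mem_filter] at hi hj
      have : |v i - v j| < δ := abs_sub_lt_iff.2
        ⟨by linarith [hv j hj.1], by linarith [hv i hi.1]⟩
      linarith [hsep i hi.1 j hj.1 hij]
    calc ∑ i ∈ s.filter (fun i => v i < δ), Φ (v i)
        ≤ (s.filter fun i => v i < δ).card • Φ 0 :=
          Finset.sum_le_card_nsmul _ _ _ fun i hi =>
            hanti self_mem_Ici (hv i (Finset.mem_filter.1 hi).1) (hv i (Finset.mem_filter.1 hi).1)
      _ ≤ 1 • Φ 0 := nsmul_le_nsmul_left (hnonneg 0 self_mem_Ici) hcard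
      _ = Φ 0 := one_nsmul _
  · exact sum_le_inv_mul_integral_of_separated hanti hnonneg hint _ v hδ
      (fun i hi => not_lt.1 (Finset.mem_filter.1 hi).2)
      fun i hi j hj => hsep i (Finset.mem_filter.1 hi).1 j (Finset.mem_filter.1 hj).1

theorem inv_le_abs_intCast_sub_div {c : ℝ} (hc : 0 < c) {k l : ℤ} (hkl : k ≠ l) :
    c⁻¹ ≤ |((k : ℝ) - l) / c| := by
  rw [abs_div, abs_of_pos hc, inv_eq_one_div]
  gcongr
  exact_mod_cast Int.one_le_abs (sub_ne_zero.2 hkl)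

theorem sum_abs_sub_intCast_div_le (hanti : AntitoneOn Φ (Ici 0))
    (hnonneg : ∀ x ∈ Ici (0 : ℝ), 0 ≤ Φ x) (hint : IntegrableOn Φ (Ioi 0))
    {c : ℝ} (hc : 0 < c) (r : ℝ) (s : Finset ℤ) :
    ∑ k ∈ s, Φ (|r - k| / c) ≤ 2 * (Φ 0 + c * ∫ x in Ioi 0, Φ x) := by
  classical
  have key := fun (t : Finset ℤ) (v : ℤ → ℝ) =>
    sum_le_add_inv_mul_integral_of_separated hanti hnonneg hint t v (inv_pos.2 hc)
  simp only [inv_inv] at key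
  rw [← Finset.sum_filter_add_sum_filter_not s fun k => (k : ℝ) ≤ r, two_mul]
  gcongr ?_ + ?_
  · calc ∑ k ∈ s.filter (fun k : ℤ => (k : ℝ) ≤ r), Φ (|r - k| / c)
        = ∑ k ∈ s.filter (fun k : ℤ => (k : ℝ) ≤ r), Φ ((r - k) / c) :=
          Finset.sum_congr rfl fun k hk => by
            rw [abs_of_nonneg (sub_nonneg.2 (Finset.mem_filter.1 hk).2)]
      _ ≤ _ := key _ _ (fun k hk => div_nonneg (sub_nonneg.2 (Finset.mem_filter.1 hk).2) hc.le)
          fun k _ l _ hkl => by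
            rw [← sub_div, sub_sub_sub_cancel_left]
            exact inv_le_abs_intCast_sub_div hc (Ne.symm hkl)
  · calc ∑ k ∈ s.filter (fun k : ℤ => ¬(k : ℝ) ≤ r), Φ (|r - k| / c)
        = ∑ k ∈ s.filter (fun k : ℤ => ¬(k : ℝ) ≤ r), Φ ((k - r) / c) :=
          Finset.sum_congr rfl fun k hk => by
            rw [abs_sub_comm, abs_of_pos (sub_pos.2 (not_le.1 (Finset.mem_filter.1 hk).2))]
      _ ≤ _ := key _ _ (fun k hk => div_nonneg
            (sub_nonneg.2 (not_le.1 (Finset.mem_filter.1 hk).2).le) hc.le)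
          fun k _ l _ hkl => by
            rw [← sub_div, sub_sub_sub_cancel_right]
            exact inv_le_abs_intCast_sub_div hc hkl

theorem sum_abs_intCast_sub_div_le (hanti : AntitoneOn Φ (Ici 0))
    (hnonneg : ∀ x ∈ Ici (0 : ℝ), 0 ≤ Φ x) (hint : IntegrableOn Φ (Ioi 0))
    {c : ℝ} (hc : 0 < c) (m : ℤ) (s : Finset ℤ) :
    ∑ k ∈ s, Φ (|(m : ℝ) - k| / c) ≤ Φ 0 + 2 * c * ∫ x in Ioi 0, Φ x := by
  classical
  rw [← Finset.sum_filter_add_sum_filter_not s fun k => k ≤ m, mul_assoc, two_mul, ← add_assoc]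
  gcongr ?_ + ?_
  · calc ∑ k ∈ s.filter (fun k => k ≤ m), Φ (|(m : ℝ) - k| / c)
        = ∑ k ∈ s.filter (fun k => k ≤ m), Φ ((m - k) / c) :=
          Finset.sum_congr rfl fun k hk => by
            rw [abs_of_nonneg (sub_nonneg.2 (Int.cast_le.2 (Finset.mem_filter.1 hk).2))]
      _ ≤ Φ 0 + c⁻¹⁻¹ * ∫ x in Ioi 0, Φ x :=
          sum_le_add_inv_mul_integral_of_separated hanti hnonneg hint _ _ (inv_pos.2 hc)
            (fun k hk => div_nonneg (sub_nonneg.2 (Int.cast_le.2 (Finset.mem_filter.1 hk).2)) hc.le)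
            fun k _ l _ hkl => by
              rw [← sub_div, sub_sub_sub_cancel_left]
              exact inv_le_abs_intCast_sub_div hc (Ne.symm hkl)
      _ = Φ 0 + c * ∫ x in Ioi 0, Φ x := by rw [inv_inv]
  · calc ∑ k ∈ s.filter (fun k => ¬k ≤ m), Φ (|(m : ℝ) - k| / c)
        = ∑ k ∈ s.filter (fun k => ¬k ≤ m), Φ ((k - m) / c) :=
          Finset.sum_congr rfl fun k hk => by
            rw [abs_sub_comm,
              abs_of_pos (sub_pos.2 (Int.cast_lt.2 (not_le.1 (Finset.mem_filter.1 hk).2)))]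
      _ ≤ c⁻¹⁻¹ * ∫ x in Ioi 0, Φ x :=
          sum_le_inv_mul_integral_of_separated hanti hnonneg hint _ _ (inv_pos.2 hc)
            (fun k hk => by
              have : (1 : ℝ) ≤ k - m := by
                exact_mod_cast Int.sub_pos_of_lt (not_le.1 (Finset.mem_filter.1 hk).2)
              rw [inv_eq_one_div]
              gcongr)
            fun k _ l _ hkl => by
              rw [← sub_div, sub_sub_sub_cancel_right]
              exact inv_le_abs_intCast_sub_div hc hkl
      _ = c * ∫ x in Ioi 0, Φ x := by rw [inv_inv]

theorem sum_mul_comp_two_mul_sub_le (hanti : AntitoneOn Φ (Ici 0))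
    (hnonneg : ∀ x ∈ Ici (0 : ℝ), 0 ≤ Φ x) (hint : IntegrableOn Φ (Ioi 0)) (x : ℝ)
    (s : Finset ℤ) :
    ∑ k ∈ s, Φ (|1 - (k : ℝ)| / 3) * Φ |2 * x - k| ≤
      (2 * (Φ 0 + ∫ v in Ioi 0, Φ v) + (Φ 0 + 6 * ∫ v in Ioi 0, Φ v)) *
        Φ (|2 * x - 1| / 4) := by
  have hsplit : ∀ k : ℤ, Φ (|1 - (k : ℝ)| / 3) * Φ |2 * x - k| ≤
      Φ (|2 * x - 1| / 4) * (Φ (|1 - (k : ℝ)| / 3) + Φ |2 * x - k|) := fun k =>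
    antitoneOn_mul_le_mul_add hanti hnonneg (by positivity) (abs_nonneg _) (by positivity) (by
      by_contra! hnear
      have := abs_sub_le (2 * x) k 1
      rw [abs_sub_comm (k : ℝ)] at this
      linarith [hnear.1, hnear.2])
  have hlattice := sum_abs_sub_intCast_div_le hanti hnonneg hint one_pos (2 * x) s
  have hcentred := sum_abs_intCast_sub_div_le hanti hnonneg hint three_pos 1 s
  simp only [div_one, one_mul] at hlattice
  push_cast at hcentred
  calc ∑ k ∈ s, Φ (|1 - (k : ℝ)| / 3) * Φ |2 * x - k|
      ≤ ∑ k ∈ s, Φ (|2 * x - 1| / 4) * (Φ (|1 - (k : ℝ)| / 3) + Φ |2 * x - k|) :=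
        Finset.sum_le_sum fun k _ => hsplit k
    _ = Φ (|2 * x - 1| / 4) * (∑ k ∈ s, Φ (|1 - (k : ℝ)| / 3) + ∑ k ∈ s, Φ |2 * x - k|) := by
        rw [← Finset.sum_add_distrib, Finset.mul_sum]
    _ ≤ Φ (|2 * x - 1| / 4) *
          ((Φ 0 + 2 * 3 * ∫ v in Ioi 0, Φ v) + 2 * (Φ 0 + ∫ v in Ioi 0, Φ v)) := by
        gcongr
        exact hnonneg _ (mem_Ici.2 (by positivity))
    _ = _ := by ring

theorem norm_sum_mul_comp_two_mul_sub_le {𝕜 : Type*} [RCLike 𝕜] (hanti : AntitoneOn Φ (Ici 0))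
    (hnonneg : ∀ x ∈ Ici (0 : ℝ), 0 ≤ Φ x) (hint : IntegrableOn Φ (Ioi 0))
    {a : ℤ → 𝕜} {C : ℝ} (hC : 0 ≤ C) (ha : ∀ k : ℤ, ‖a k‖ ≤ C * Φ (|1 - (k : ℝ)| / 3))
    {f : ℝ → 𝕜} {x : ℝ} (hf : ∀ k : ℤ, ‖f (2 * x - k)‖ ≤ Φ |2 * x - k|) (s : Finset ℤ) :
    ‖∑ k ∈ s, a k * f (2 * x - k)‖ ≤
      C * (2 * (Φ 0 + ∫ v in Ioi 0, Φ v) + (Φ 0 + 6 * ∫ v in Ioi 0, Φ v)) *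
        Φ (|2 * x - 1| / 4) :=
  calc ‖∑ k ∈ s, a k * f (2 * x - k)‖ ≤ ∑ k ∈ s, ‖a k‖ * ‖f (2 * x - k)‖ :=
        norm_sum_le_of_le _ fun k _ => (norm_mul _ _).le
    _ ≤ ∑ k ∈ s, C * (Φ (|1 - (k : ℝ)| / 3) * Φ |2 * x - k|) :=
        Finset.sum_le_sum fun k _ => (mul_assoc C _ _).symm ▸
          mul_le_mul (ha k) (hf k) (norm_nonneg _) ((norm_nonneg _).trans (ha k))
    _ ≤ _ := by
        rw [← Finset.mul_sum, mul_assoc]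
        exact mul_le_mul_of_nonneg_left (sum_mul_comp_two_mul_sub_le hanti hnonneg hint x s) hC

theorem norm_integral_mul_comp_two_mul_sub_le {𝕜 : Type*} [RCLike 𝕜]
    (hanti : AntitoneOn Φ (Ici 0)) (hnonneg : ∀ x ∈ Ici (0 : ℝ), 0 ≤ Φ x)
    (hint : Integrable fun x => Φ |x|) {f g : ℝ → 𝕜} (hf : ∀ᵐ x, ‖f x‖ ≤ Φ |x|)
    (hg : ∀ᵐ x, ‖g x‖ ≤ Φ |x|) (c : ℝ) :
    ‖∫ u, f u * g (2 * u - c)‖ ≤ 3 / 2 * (∫ u, Φ |u|) * Φ (|c| / 3) := by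
  have hint' : Integrable fun u => Φ |2 * u - c| :=
    (hint.comp_sub_right c).comp_mul_left' two_ne_zero
  have hval : ∫ u, Φ |2 * u - c| = (∫ u, Φ |u|) / 2 := by
    rw [Measure.integral_comp_mul_left (fun v => Φ |v - c|) 2,
      integral_sub_right_eq_self (fun v => Φ |v|) c]
    norm_num
    ring
  have hbound : ∀ᵐ u, ‖f u * g (2 * u - c)‖ ≤ Φ (|c| / 3) * (Φ |u| + Φ |2 * u - c|) := by
    filter_upwards [hf, (quasiMeasurePreserving_two_mul_sub c).ae hg] with u hfu hgu
    have hfar : |c| / 3 ≤ |u| ∨ |c| / 3 ≤ |2 * u - c| := by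
      by_contra! hnear
      have := abs_sub_abs_le_abs_sub c (2 * u)
      rw [abs_sub_comm, abs_mul, abs_two] at this
      linarith [hnear.1, hnear.2]
    calc ‖f u * g (2 * u - c)‖ = ‖f u‖ * ‖g (2 * u - c)‖ := norm_mul _ _
      _ ≤ Φ |u| * Φ |2 * u - c| :=
          mul_le_mul hfu hgu (norm_nonneg _) (hnonneg _ (abs_nonneg u))
      _ ≤ _ := antitoneOn_mul_le_mul_add hanti hnonneg (abs_nonneg _) (abs_nonneg _)
          (by positivity) hfar
  calc ‖∫ u, f u * g (2 * u - c)‖ ≤ ∫ u, Φ (|c| / 3) * (Φ |u| + Φ |2 * u - c|) :=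
        norm_integral_le_of_norm_le ((hint.add hint').const_mul _) hbound
    _ = _ := by
        rw [integral_const_mul, integral_add hint hint', hval]
        ring

end AntitoneKernel

theorem ae_norm_le_of_tendsto_eLpNorm_sub {α E ι : Type*} [MeasurableSpace α] {μ : Measure α}
    [NormedAddCommGroup E] {l : Filter ι} [l.NeBot] [l.IsCountablyGenerated]
    {p : ENNReal} (hp : p ≠ 0) {F : ι → α → E} {f : α → E} {g : α → ℝ}
    (hF : ∀ i, AEStronglyMeasurable (F i) μ) (hf : AEStronglyMeasurable f μ)
    (hlim : Tendsto (fun i => eLpNorm (fun x => f x - F i x) p μ) l (nhds 0))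
    (hbound : ∀ᵐ x ∂μ, ∀ i, ‖F i x‖ ≤ g x) :
    ∀ᵐ x ∂μ, ‖f x‖ ≤ g x := by
  have hmeas : TendstoInMeasure μ F l f := tendstoInMeasure_of_tendsto_eLpNorm hp hF hf
    (by simp only [eLpNorm_sub_comm]; exact hlim)
  obtain ⟨ns, -, hae⟩ := hmeas.exists_seq_tendsto_ae'
  filter_upwards [hae, hbound] with x hx hbx
  exact le_of_tendsto hx.norm (Eventually.of_forall fun n => hbx (ns n))

theorem mother_wavelet_pointwise_decay_general
    (Φ : ℝ → ℝ)
    (hΦanti : AntitoneOn Φ (Set.Ici (0 : ℝ)))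
    (hΦnonneg : ∀ x ∈ Set.Ici (0 : ℝ), 0 ≤ Φ x)
    (hΦint : Integrable (fun x : ℝ => Φ |x|))
    (φ : ℝ → ℂ) (hφL2 : MemLp φ 2 (volume : Measure ℝ))
    (hφdom : ∀ᵐ x : ℝ, ‖φ x‖ ≤ Φ |x|)
    (h : ℤ → ℂ)
    (hh : ∀ k : ℤ, h k =
      (Real.sqrt 2 : ℂ) * ∫ u : ℝ, φ u * (starRingEnd ℂ) (φ (2 * u - k)))
    (lam : ℤ → ℂ)
    (hlam : ∀ k : ℤ, lam k = (-1 : ℂ) ^ (1 - k) * (starRingEnd ℂ) (h (1 - k)))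
    (ψ : ℝ → ℂ) (hψL2 : MemLp ψ 2 (volume : Measure ℝ))
    (hψser : Tendsto
      (fun s : Finset ℤ =>
        eLpNorm
          (fun x : ℝ => ψ x - (Real.sqrt 2 : ℂ) * ∑ k ∈ s, lam k * φ (2 * x - k)) 2
          (volume : Measure ℝ))
      atTop (nhds 0)) :
    ∀ᵐ x : ℝ, ‖ψ x‖ ≤
      3 * (∫ u : ℝ, Φ |u|) *
        (2 * (Φ 0 + ∫ v in Set.Ioi (0 : ℝ), Φ v) +
          (Φ 0 + 6 * ∫ v in Set.Ioi (0 : ℝ), Φ v)) * Φ (|2 * x - 1| / 4) := by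
  have hΦIoi : IntegrableOn Φ (Ioi 0) :=
    hΦint.integrableOn.congr_fun (fun x hx => by simp [abs_of_pos (mem_Ioi.1 hx)]) measurableSet_Ioi
  have hI : 0 ≤ ∫ u, Φ |u| := integral_nonneg fun u => hΦnonneg _ (abs_nonneg u)
  have hsqrt : ‖(Real.sqrt 2 : ℂ)‖ = Real.sqrt 2 := by simp
  have hlam_le : ∀ k : ℤ, ‖lam k‖ ≤ Real.sqrt 2 * (3 / 2 * ∫ u, Φ |u|) * Φ (|1 - (k : ℝ)| / 3) := by
    intro k
    have := norm_integral_mul_comp_two_mul_sub_le hΦanti hΦnonneg hΦint hφdom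
      (g := fun y => starRingEnd ℂ (φ y)) (by simpa using hφdom) ((1 - k : ℤ) : ℝ)
    rw [hlam, norm_mul, norm_zpow, norm_neg, norm_one, one_zpow, one_mul, RCLike.norm_conj, hh,
      norm_mul, hsqrt, mul_assoc]
    push_cast at this ⊢
    exact mul_le_mul_of_nonneg_left this (Real.sqrt_nonneg 2)
  have hpartial : ∀ᵐ x, ∀ s : Finset ℤ, ‖(Real.sqrt 2 : ℂ) * ∑ k ∈ s, lam k * φ (2 * x - k)‖ ≤
      3 * (∫ u : ℝ, Φ |u|) * (2 * (Φ 0 + ∫ v in Set.Ioi (0 : ℝ), Φ v) +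
          (Φ 0 + 6 * ∫ v in Set.Ioi (0 : ℝ), Φ v)) * Φ (|2 * x - 1| / 4) := by
    filter_upwards [ae_all_iff.2 fun k : ℤ => (quasiMeasurePreserving_two_mul_sub k).ae hφdom]
      with x hx s
    rw [norm_mul, hsqrt]
    refine (mul_le_mul_of_nonneg_left (norm_sum_mul_comp_two_mul_sub_le hΦanti hΦnonneg hΦIoi
      (by positivity) hlam_le hx s) (Real.sqrt_nonneg 2)).trans_eq ?_
    simp only [← mul_assoc, Real.mul_self_sqrt zero_le_two]
    ring
  have hmeas : ∀ k : ℤ, AEStronglyMeasurable (fun x => φ (2 * x - k)) :=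
    fun k => hφL2.aestronglyMeasurable.comp_quasiMeasurePreserving
      (quasiMeasurePreserving_two_mul_sub k)
  exact ae_norm_le_of_tendsto_eLpNorm_sub two_ne_zero
    (fun s => (Finset.aestronglyMeasurable_fun_sum s fun k _ => (hmeas k).const_mul _).const_mul _)
    hψL2.aestronglyMeasurable hψser hpartial

/-- Explicit pointwise decay estimate for the m-wavelet (key step in the proof of
Lemma 2.1): with `h_k = √2 ∫ φ(u) conj(φ(2u−k)) du`, `λ_k = (−1)^{1−k} conj(h_{1−k})`
and `ψ(x) = √2 Σ_k λ_k φ(2x−k)` (series converging in `L²`), one has a.e.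
`|ψ(x)| ≤ 3 (∫ Φ(|u|) du)(D₁+D₂) Φ(|2x−1|/4)` where `D₁ = 2(Φ(0)+∫₀^∞Φ)` and
`D₂ = Φ(0)+6∫₀^∞Φ`. -/
theorem mother_wavelet_pointwise_decay
    (Φ : ℝ → ℝ)
    (hΦbdd : ∃ M : ℝ, ∀ x ∈ Set.Ici (0 : ℝ), Φ x ≤ M)
    (hΦanti : AntitoneOn Φ (Set.Ici (0 : ℝ)))
    (hΦnonneg : ∀ x ∈ Set.Ici (0 : ℝ), 0 ≤ Φ x)
    (hΦint : Integrable (fun x : ℝ => Φ |x|))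
    (φ : ℝ → ℂ) (hφL2 : MemLp φ 2 (volume : Measure ℝ))
    (hφdom : ∀ᵐ x : ℝ, ‖φ x‖ ≤ Φ |x|)
    (h : ℤ → ℂ)
    (hh : ∀ k : ℤ, h k =
      (Real.sqrt 2 : ℂ) * ∫ u : ℝ, φ u * (starRingEnd ℂ) (φ (2 * u - k)))
    (lam : ℤ → ℂ)
    (hlam : ∀ k : ℤ, lam k = (-1 : ℂ) ^ (1 - k) * (starRingEnd ℂ) (h (1 - k)))
    (ψ : ℝ → ℂ) (hψL2 : MemLp ψ 2 (volume : Measure ℝ))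
    (hψser : Tendsto
      (fun s : Finset ℤ =>
        eLpNorm
          (fun x : ℝ => ψ x - (Real.sqrt 2 : ℂ) * ∑ k ∈ s, lam k * φ (2 * x - k)) 2
          (volume : Measure ℝ))
      atTop (nhds 0)) :
    ∀ᵐ x : ℝ, ‖ψ x‖ ≤
      3 * (∫ u : ℝ, Φ |u|) *
        (2 * (Φ 0 + ∫ v in Set.Ioi (0 : ℝ), Φ v) +
          (Φ 0 + 6 * ∫ v in Set.Ioi (0 : ℝ), Φ v)) * Φ (|2 * x - 1| / 4) :=
  mother_wavelet_pointwise_decay_general Φ hΦanti hΦnonneg hΦint φ hφL2 hφdom h hh lam hlam ψ hψL2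
    hψser
end

section
/- For every α > 0, every s ∈ ℝ, and every v ∈ ℝ with v ≠ 0, one has |sin(s/v)| ≤ (ln(e^α + |s|) / ln(e^α + |v|))^α. -/
/-!
Write `L x = log (exp α + x)`. If `|s| ≥ |v|`, the right-hand side is at least `1`. Otherwise
`|sin (s / v)| ≤ |s| / |v|`, and it suffices that `x ↦ x / L x ^ α` is monotone on `[0, ∞)`:
its derivative has the sign of `L x - α x / (exp α + x)`, which is nonnegative because
`L x ≥ L 0 = α`.
-/

open Real Set

lemma le_log_exp_add (α : ℝ) {x : ℝ} (hx : 0 ≤ x) : α ≤ log (exp α + x) := by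
  calc α = log (exp α) := (log_exp α).symm
    _ ≤ log (exp α + x) := log_le_log (exp_pos α) (by linarith)

lemma log_exp_add_pos {α : ℝ} (hα : 0 < α) {x : ℝ} (hx : 0 ≤ x) : 0 < log (exp α + x) :=
  hα.trans_le (le_log_exp_add α hx)

lemma hasDerivAt_div_log_exp_add_rpow {α : ℝ} (hα : 0 < α) {x : ℝ} (hx : 0 ≤ x) :
    HasDerivAt (fun y => y / log (exp α + y) ^ α)
      ((1 * log (exp α + x) ^ α -
          x * (1 / (exp α + x) * α * log (exp α + x) ^ (α - 1))) /
        (log (exp α + x) ^ α) ^ 2) x := by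
  have hL := log_exp_add_pos hα hx
  have hlog : HasDerivAt (fun y => log (exp α + y)) (1 / (exp α + x)) x :=
    ((hasDerivAt_id x).const_add (exp α)).log (by positivity)
  exact (hasDerivAt_id x).div (hlog.rpow_const (Or.inl hL.ne')) (by positivity)

lemma monotoneOn_div_log_exp_add_rpow {α : ℝ} (hα : 0 < α) :
    MonotoneOn (fun x => x / log (exp α + x) ^ α) (Ici 0) := by
  refine monotoneOn_of_hasDerivWithinAt_nonneg (convex_Ici 0)
    (fun x hx => (hasDerivAt_div_log_exp_add_rpow hα hx).continuousAt.continuousWithinAt)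
    (fun x hx => (hasDerivAt_div_log_exp_add_rpow hα
      (interior_subset hx : x ∈ Ici (0 : ℝ))).hasDerivWithinAt) ?_
  intro x hx
  rw [interior_Ici] at hx
  have hx₀ : 0 ≤ x := le_of_lt hx
  set L := log (exp α + x)
  have hL : 0 < L := log_exp_add_pos hα hx₀
  have hfrac : x * (1 / (exp α + x)) * α ≤ L := by
    have : x * (1 / (exp α + x)) ≤ 1 := by
      rw [mul_one_div, div_le_one (by positivity)]
      linarith [exp_pos α]
    calc x * (1 / (exp α + x)) * α ≤ 1 * α := by gcongr
      _ ≤ L := by rw [one_mul]; exact le_log_exp_add α hx₀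
  have hkey : x * (1 / (exp α + x) * α * L ^ (α - 1)) ≤ 1 * L ^ α := by
    calc x * (1 / (exp α + x) * α * L ^ (α - 1)) = (x * (1 / (exp α + x)) * α) * L ^ (α - 1) := by
          ring
      _ ≤ L * L ^ (α - 1) := by gcongr
      _ = 1 * L ^ α := by rw [rpow_sub_one hL.ne', one_mul]; field_simp
  exact div_nonneg (sub_nonneg.mpr hkey) (sq_nonneg _)

lemma div_le_log_exp_add_div_rpow {α : ℝ} (hα : 0 < α) {a b : ℝ} (ha : 0 ≤ a) (hab : a ≤ b) :
    a / b ≤ (log (exp α + a) / log (exp α + b)) ^ α := by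
  have hLa := log_exp_add_pos hα ha
  have hLb := log_exp_add_pos hα (ha.trans hab)
  rcases (ha.trans hab).eq_or_lt with rfl | hb
  · rw [div_zero]
    positivity
  have hmono := monotoneOn_div_log_exp_add_rpow hα ha (ha.trans hab) hab
  rw [div_rpow hLa.le hLb.le, div_le_div_iff₀ hb (by positivity)]
  rw [div_le_div_iff₀ (by positivity) (by positivity)] at hmono
  linarith

theorem sine_log_ratio_inequality_general (α : ℝ) (hα : 0 < α) (s v : ℝ) :
    |Real.sin (s / v)| ≤
      (Real.log (Real.exp α + |s|) / Real.log (Real.exp α + |v|)) ^ α := by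
  rcases le_or_gt |v| |s| with hvs | hsv
  · have hLv := log_exp_add_pos hα (abs_nonneg v)
    have hratio : 1 ≤ log (exp α + |s|) / log (exp α + |v|) := by
      rw [one_le_div hLv]
      exact log_le_log (by positivity) (by linarith)
    exact (abs_sin_le_one _).trans (one_le_rpow hratio hα.le)
  · calc |sin (s / v)| ≤ |s / v| := abs_sin_le_abs
      _ = |s| / |v| := abs_div s v
      _ ≤ _ := div_le_log_exp_add_div_rpow hα (abs_nonneg s) hsv.le

theorem sine_log_ratio_inequality (α : ℝ) (hα : 0 < α) (s v : ℝ) (hv : v ≠ 0) :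
    |Real.sin (s / v)| ≤
      (Real.log (Real.exp α + |s|) / Real.log (Real.exp α + |v|)) ^ α :=
  sine_log_ratio_inequality_general α hα s v
end

section
/- For every α > 0, every z ∈ ℝ, and all t, s ∈ ℝ with t ≠ s, one has |e^{itz} − e^{isz}| ≤ 2 (ln(e^α + |z|/2) / ln(e^α + 1/|t − s|))^α. -/
/-!
Factoring out `e^{isz}` gives `|e^{itz} - e^{isz}| = 2 |sin ((t - s) z / 2)|`, and
`(t - s) z / 2 = x / y` with `x = z / 2`, `y = 1 / (t - s)`. For `|x| ≥ |y|` the log ratio is at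
least one and `|sin| ≤ 1` suffices. For `|x| < |y|` use `|sin (x / y)| ≤ |x| / |y|` together with
the monotonicity of `u ↦ u / log (c + u) ^ α` on `[0, ∞)` for `c ≥ e^α`: its derivative has the
sign of `log (c + u) (c + u) - α u`, which is nonnegative because `log (c + u) ≥ α`.
-/

open Real Set

section LogRatio

variable {α c : ℝ}

lemma add_pos_of_exp_le (hc : exp α ≤ c) {x : ℝ} (hx : 0 ≤ x) : 0 < c + x :=
  add_pos_of_pos_of_nonneg ((exp_pos α).trans_le hc) hx

lemma le_log_add_of_exp_le (hc : exp α ≤ c) {x : ℝ} (hx : 0 ≤ x) : α ≤ log (c + x) := by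
  rw [← exp_le_exp, exp_log (add_pos_of_exp_le hc hx)]
  linarith

lemma monotoneOn_div_log_add_rpow (hα : 0 < α) (hc : exp α ≤ c) :
    MonotoneOn (fun x : ℝ => x / log (c + x) ^ α) (Ici 0) := by
  have hL : ∀ x ∈ Ici (0 : ℝ), 0 < log (c + x) := fun x hx =>
    hα.trans_le (le_log_add_of_exp_le hc hx)
  have hderiv : ∀ x ∈ Ici (0 : ℝ), HasDerivAt (fun x : ℝ => x / log (c + x) ^ α)
      ((1 * log (c + x) ^ α - x * (1 / (c + x) * α * log (c + x) ^ (α - 1))) /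
        (log (c + x) ^ α) ^ 2) x := by
    intro x hx
    have hcx : c + x ≠ 0 := (add_pos_of_exp_le hc hx).ne'
    have hlog : HasDerivAt (fun x => log (c + x)) (1 / (c + x)) x :=
      ((hasDerivAt_id x).const_add c).log hcx
    exact (hasDerivAt_id x).div (hlog.rpow_const (Or.inl (hL x hx).ne'))
      (rpow_pos_of_pos (hL x hx) α).ne'
  refine monotoneOn_of_deriv_nonneg (convex_Ici 0)
    (fun x hx => (hderiv x hx).continuousAt.continuousWithinAt)
    (fun x hx => (hderiv x (interior_subset hx)).differentiableAt.differentiableWithinAt)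
    fun x hx => ?_
  rw [interior_Ici] at hx
  set L := log (c + x)
  have hx0 : 0 ≤ x := hx.le
  have hcx : 0 < c + x := add_pos_of_exp_le hc hx0
  have hLα : α ≤ L := le_log_add_of_exp_le hc hx0
  have hLpos : 0 < L := hL x hx0
  have hsplit : L ^ α = L ^ (α - 1) * L := by
    rw [← rpow_add_one hLpos.ne']; ring_nf
  have hnum : 1 * L ^ α - x * (1 / (c + x) * α * L ^ (α - 1)) =
      L ^ (α - 1) * (L - α * x / (c + x)) := by
    rw [hsplit]; field_simp
  have hkey : α * x / (c + x) ≤ L := by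
    rw [div_le_iff₀ hcx]
    calc α * x ≤ α * (c + x) := mul_le_mul_of_nonneg_left (by linarith [exp_pos α]) hα.le
      _ ≤ L * (c + x) := mul_le_mul_of_nonneg_right hLα hcx.le
  rw [(hderiv x hx0).deriv, hnum]
  exact div_nonneg (mul_nonneg (rpow_pos_of_pos hLpos _).le (sub_nonneg.2 hkey)) (by positivity)

lemma div_le_log_add_div_log_add_rpow (hα : 0 < α) (hc : exp α ≤ c) {a b : ℝ} (ha : 0 ≤ a)
    (hab : a ≤ b) : a / b ≤ (log (c + a) / log (c + b)) ^ α := by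
  have hb : 0 ≤ b := ha.trans hab
  have hLa : 0 < log (c + a) := hα.trans_le (le_log_add_of_exp_le hc ha)
  have hLb : 0 < log (c + b) := hα.trans_le (le_log_add_of_exp_le hc hb)
  rcases hb.eq_or_lt with rfl | hb
  · rw [div_zero]; positivity
  have hmono := monotoneOn_div_log_add_rpow hα hc ha hb.le hab
  rw [div_rpow hLa.le hLb.le, div_le_div_iff₀ hb (rpow_pos_of_pos hLb α)]
  rwa [div_le_div_iff₀ (rpow_pos_of_pos hLa α) (rpow_pos_of_pos hLb α), mul_comm b] at hmono

lemma abs_sin_div_le_log_add_div_log_add_rpow (hα : 0 < α) (hc : exp α ≤ c) (x y : ℝ) :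
    |sin (x / y)| ≤ (log (c + |x|) / log (c + |y|)) ^ α := by
  have hLy : 0 < log (c + |y|) := hα.trans_le (le_log_add_of_exp_le hc (abs_nonneg y))
  rcases le_total |y| |x| with hyx | hxy
  · have hratio : 1 ≤ log (c + |x|) / log (c + |y|) := by
      rw [one_le_div hLy]
      exact log_le_log (add_pos_of_exp_le hc (abs_nonneg y)) (by linarith)
    exact (abs_sin_le_one _).trans (one_le_rpow hratio hα.le)
  · calc |sin (x / y)| ≤ |x / y| := abs_sin_le_abs
      _ = |x| / |y| := abs_div x y
      _ ≤ _ := div_le_log_add_div_log_add_rpow hα hc (abs_nonneg x) hxy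

end LogRatio

lemma norm_exp_I_mul_sub_exp_I_mul (t s z : ℝ) :
    ‖Complex.exp (Complex.I * t * z) - Complex.exp (Complex.I * s * z)‖ =
      2 * |sin ((t - s) * z / 2)| := by
  have hfactor : Complex.exp (Complex.I * t * z) - Complex.exp (Complex.I * s * z) =
      Complex.exp (Complex.I * ↑(s * z)) * (Complex.exp (Complex.I * ↑((t - s) * z)) - 1) := by
    rw [mul_sub, mul_one, ← Complex.exp_add]
    push_cast
    ring_nf
  rw [hfactor, norm_mul, Complex.norm_exp_I_mul_ofReal, Complex.norm_exp_I_mul_ofReal_sub_one,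
    norm_mul, Real.norm_eq_abs, Real.norm_eq_abs, one_mul, abs_two, mul_div_assoc]

theorem complex_exponential_increment_log_bound_general (α : ℝ) (hα : 0 < α) (z t s : ℝ) :
    ‖Complex.exp (Complex.I * t * z) - Complex.exp (Complex.I * s * z)‖ ≤
      2 * (Real.log (Real.exp α + |z| / 2) / Real.log (Real.exp α + 1 / |t - s|)) ^ α := by
  have harg : (t - s) * z / 2 = (z / 2) / (1 / (t - s)) := by
    rw [div_div_eq_mul_div, div_one]; ring
  have hsin := abs_sin_div_le_log_add_div_log_add_rpow hα le_rfl (z / 2) (1 / (t - s))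
  rw [abs_div, abs_two, abs_div, abs_one, ← harg] at hsin
  rw [norm_exp_I_mul_sub_exp_I_mul]
  linarith

theorem complex_exponential_increment_log_bound (α : ℝ) (hα : 0 < α) (z t s : ℝ)
    (hts : t ≠ s) :
    ‖Complex.exp (Complex.I * t * z) - Complex.exp (Complex.I * s * z)‖ ≤
      2 * (Real.log (Real.exp α + |z| / 2) / Real.log (Real.exp α + 1 / |t - s|)) ^ α :=
  complex_exponential_increment_log_bound_general α hα z t s
end

section
/- Let α > 0 and let g ∈ L¹(ℝ, ℂ) satisfy ∫_ℝ (ln(1 + |u|))^α |g(u)| du < ∞. Define δ(x) = (1/2π) ∫_ℝ e^{ixu} g(u) du and δ_{jk}(x) = 2^{j/2} δ(2^j x − k) for j ∈ ℕ₀, k ∈ ℤ. Set R_{0α} = (1/π) ∫_ℝ (ln(e^α + |u|/2))^α |g(u)| du and R_{1α} = (1/π) ∫_ℝ (ln(e^α + |u| + 1))^α |g(u)| du. Then for all x, y ∈ ℝ with x ≠ y and all k ∈ ℤ: |δ_{0k}(x) − δ_{0k}(y)| ≤ R_{0α} · (ln(e^α + 1/|x − y|))^{−α}, and for every integer j ≥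 1: |δ_{jk}(x) − δ_{jk}(y)| ≤ 2^{j/2} j^α R_{1α} · (ln(e^α + 1/|x − y|))^{−α}. -/
open MeasureTheory

/-!
Writing `δ x - δ y = (1/2π) ∫ (e^{ixu} - e^{iyu}) g(u) du` and bounding
`|e^{ixu} - e^{iyu}| ≤ min (2, |u| |x - y|)`, everything reduces to the pointwise inequality
`min (1, a/s) ≤ (ln (e^α + a) / ln (e^α + s))^α`, which holds because `t ↦ ln (e^α + t)^α / t` is
nonincreasing (this is where `ln (e^α + t) ≥ α` is needed). For `j ≥ 1` the distance is dilated by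
`2^j`, and the resulting factor `2^(j-1)` inside the logarithm only costs `j^α`, since
`e^α + 2^(j-1) t ≤ (e^α + t + 1)^j`.
-/

/-- The inverse Fourier transform for the convention `f̂(y) = ∫ e^{-iyx} f(x) dx`; Mathlib's `𝓕⁻`
uses the kernel `e^{2πixy}` instead. -/
noncomputable def invFourier (g : ℝ → ℂ) (x : ℝ) : ℂ :=
  (1 / (2 * (Real.pi : ℂ))) * ∫ u : ℝ, Complex.exp (Complex.I * x * u) * g u

section

open Real

lemma Real.add_rpow_le_two_rpow_mul_rpow_add_rpow {p a b : ℝ} (ha : 0 ≤ a) (hb : 0 ≤ b)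
    (hp : 0 ≤ p) : (a + b) ^ p ≤ 2 ^ p * (a ^ p + b ^ p) := calc
  (a + b) ^ p ≤ (2 * max a b) ^ p := by
    rw [two_mul]; gcongr <;> simp
  _ = 2 ^ p * max a b ^ p := mul_rpow zero_le_two (le_max_of_le_left ha)
  _ ≤ 2 ^ p * (a ^ p + b ^ p) := by
    gcongr
    rcases max_choice a b with h | h <;> rw [h] <;>
      linarith [rpow_nonneg ha p, rpow_nonneg hb p]

lemma norm_cexp_I_mul_sub_cexp_I_mul_le (x y u : ℝ) :
    ‖Complex.exp (Complex.I * x * u) - Complex.exp (Complex.I * y * u)‖ ≤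
      min 2 (|u| * |x - y|) := by
  have hfactor : Complex.exp (Complex.I * x * u) - Complex.exp (Complex.I * y * u) =
      Complex.exp (Complex.I * ↑(y * u)) * (Complex.exp (Complex.I * ↑((x - y) * u)) - 1) := by
    rw [mul_sub, ← Complex.exp_add]; push_cast; ring_nf
  rw [hfactor, norm_mul, Complex.norm_exp_I_mul_ofReal, one_mul]
  refine le_min ?_ ?_
  · exact (norm_sub_le _ _).trans (by rw [Complex.norm_exp_I_mul_ofReal, norm_one]; norm_num)
  · exact norm_exp_I_mul_ofReal_sub_one_le.trans (by rw [norm_eq_abs, abs_mul, mul_comm])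

lemma norm_invFourier_sub_le {g : ℝ → ℂ} (hg : Integrable g) {w : ℝ → ℝ}
    (hw : Integrable fun u => w u * ‖g u‖) {x y c : ℝ}
    (hmin : ∀ u, min 2 (|u| * |x - y|) ≤ 2 * c * w u) :
    ‖invFourier g x - invFourier g y‖ ≤ c * ((1 / π) * ∫ u, w u * ‖g u‖) := by
  have hint (z : ℝ) : Integrable fun u : ℝ => Complex.exp (Complex.I * z * u) * g u :=
    hg.bdd_mul (c := 1) (by fun_prop) <| ae_of_all _ fun u => by
      rw [mul_assoc, ← Complex.ofReal_mul, Complex.norm_exp_I_mul_ofReal]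
  have hbound : ‖∫ u : ℝ, (Complex.exp (Complex.I * x * u) * g u -
      Complex.exp (Complex.I * y * u) * g u)‖ ≤ 2 * c * ∫ u, w u * ‖g u‖ := by
    rw [← integral_const_mul]
    refine norm_integral_le_of_norm_le (hw.const_mul _) (ae_of_all _ fun u => ?_)
    rw [← sub_mul, norm_mul, ← mul_assoc]
    exact mul_le_mul_of_nonneg_right
      ((norm_cexp_I_mul_sub_cexp_I_mul_le x y u).trans (hmin u)) (norm_nonneg _)
  have hnorm : ‖1 / (2 * (π : ℂ))‖ = 1 / (2 * π) := by simp [abs_of_pos pi_pos]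
  rw [invFourier, invFourier, ← mul_sub, ← integral_sub (hint x) (hint y), norm_mul, hnorm]
  calc 1 / (2 * π) * ‖_‖ ≤ 1 / (2 * π) * (2 * c * ∫ u, w u * ‖g u‖) := by gcongr
    _ = c * ((1 / π) * ∫ u, w u * ‖g u‖) := by field_simp

lemma integrable_rpow_log_mul_norm {α : ℝ} (hα : 0 ≤ α) {g : ℝ → ℂ} (hg : Integrable g)
    (hglog : Integrable fun u : ℝ => log (1 + |u|) ^ α * ‖g u‖) {f : ℝ → ℝ} {C : ℝ}
    (hf : Measurable f) (hf1 : ∀ u, 1 ≤ f u) (hfC : ∀ u, f u ≤ C * (1 + |u|)) :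
    Integrable fun u => log (f u) ^ α * ‖g u‖ := by
  have hC : 1 ≤ C := by simpa using (hf1 0).trans (hfC 0)
  refine ((hg.norm.const_mul (2 ^ α * log C ^ α)).add (hglog.const_mul (2 ^ α))).mono'
    ((hf.log.pow_const α).aestronglyMeasurable.mul hg.aestronglyMeasurable.norm)
    (ae_of_all _ fun u => ?_)
  have hlog_f : 0 ≤ log (f u) := log_nonneg (hf1 u)
  have hlog_u : 0 ≤ log (1 + |u|) := log_nonneg (by linarith [abs_nonneg u])
  have hsplit : log (f u) ≤ log C + log (1 + |u|) := by
    rw [← log_mul (by positivity) (by positivity)]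
    exact log_le_log (by linarith [hf1 u]) (hfC u)
  rw [norm_of_nonneg (by positivity)]
  calc log (f u) ^ α * ‖g u‖ ≤ (log C + log (1 + |u|)) ^ α * ‖g u‖ := by gcongr
    _ ≤ 2 ^ α * (log C ^ α + log (1 + |u|) ^ α) * ‖g u‖ := by
      gcongr
      exact add_rpow_le_two_rpow_mul_rpow_add_rpow (log_nonneg hC) hlog_u hα
    _ = _ := by simp only [Pi.add_apply]; ring

variable {α : ℝ}

lemma rpow_log_exp_add_le_div_mul (hα : 0 ≤ α) {a s : ℝ} (ha : 0 < a) (has : a ≤ s) :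
    log (exp α + s) ^ α ≤ s / a * log (exp α + a) ^ α := by
  have hexp : 1 ≤ exp α := one_le_exp hα
  have hs : 0 < s := ha.trans_le has
  set La := log (exp α + a)
  set Ls := log (exp α + s)
  have hαLa : α ≤ La := by
    simpa using log_le_log (exp_pos α) (by linarith : exp α ≤ exp α + a)
  have hLa : 0 < La := log_pos (by linarith)
  have hLaLs : La ≤ Ls := log_le_log (by linarith) (by linarith)
  have hLs : 0 < Ls := hLa.trans_le hLaLs
  have hquot : Ls - La ≤ log (s / a) := by
    rw [← log_div (by linarith) (by linarith)]
    refine log_le_log (by positivity) ?_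
    rw [div_le_div_iff₀ (by linarith) ha]
    nlinarith
  have hloglog : α * (log Ls - log La) ≤ Ls - La := calc
    α * (log Ls - log La) ≤ La * ((Ls - La) / La) := by
      gcongr
      · exact sub_nonneg.2 (log_le_log hLa hLaLs)
      · rw [← log_div hLs.ne' hLa.ne', sub_div, div_self hLa.ne']
        exact log_le_sub_one_of_pos (by positivity)
    _ = Ls - La := by field_simp
  rw [rpow_def_of_pos hLs, rpow_def_of_pos hLa, ← exp_log (by positivity : 0 < s / a),
    ← exp_add, exp_le_exp]
  linarith

lemma min_two_mul_le_rpow_log (hα : 0 ≤ α) {t h : ℝ} (ht : 0 ≤ t) (hh : 0 < h) :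
    min 2 (t * h) ≤ 2 * log (exp α + t / 2) ^ α * log (exp α + 1 / h) ^ (-α) := by
  have hexp : 1 ≤ exp α := one_le_exp hα
  have hLs : 0 < log (exp α + 1 / h) := log_pos (by linarith [one_div_pos.2 hh])
  rw [rpow_neg hLs.le, ← div_eq_mul_inv, le_div_iff₀ (rpow_pos_of_pos hLs α)]
  rcases le_or_gt (1 / h) (t / 2) with hst | hts
  · calc min 2 (t * h) * log (exp α + 1 / h) ^ α ≤ 2 * log (exp α + 1 / h) ^ α := by
          gcongr; exact min_le_left _ _
      _ ≤ 2 * log (exp α + t / 2) ^ α := by gcongr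
  rcases ht.eq_or_lt with rfl | ht
  · simpa using rpow_nonneg hα α
  calc min 2 (t * h) * log (exp α + 1 / h) ^ α ≤ t * h * log (exp α + 1 / h) ^ α := by
        gcongr; exact min_le_right _ _
    _ ≤ t * h * ((1 / h) / (t / 2) * log (exp α + t / 2) ^ α) := by
        gcongr; exact rpow_log_exp_add_le_div_mul hα (by positivity) hts.le
    _ = 2 * log (exp α + t / 2) ^ α := by field_simp

lemma add_two_pow_mul_div_two_le_pow {c t : ℝ} (hc : 1 ≤ c) (ht : 0 ≤ t) {j : ℕ} (hj : 1 ≤ j) :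
    c + 2 ^ j * t / 2 ≤ (c + t + 1) ^ j := by
  induction j, hj using Nat.le_induction with
  | base => linarith
  | succ j hj ih =>
    have hpow : 1 ≤ (c + t + 1) ^ j := one_le_pow₀ (by linarith)
    calc c + 2 ^ (j + 1) * t / 2 ≤ 2 * (c + 2 ^ j * t / 2) := by rw [pow_succ]; linarith
      _ ≤ 2 * (c + t + 1) ^ j := by gcongr
      _ ≤ (c + t + 1) ^ (j + 1) := by rw [pow_succ]; nlinarith

variable {g : ℝ → ℂ} (hα : 0 ≤ α) (hg : Integrable g)
  (hglog : Integrable fun u : ℝ => log (1 + |u|) ^ α * ‖g u‖)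
include hα hg hglog

lemma norm_invFourier_sub_le_of_abs_sub_eq {x y h : ℝ} (hh : 0 < h) (hxy : |x - y| = h) :
    ‖invFourier g x - invFourier g y‖ ≤
      ((1 / π) * ∫ u, log (exp α + |u| / 2) ^ α * ‖g u‖) * log (exp α + 1 / h) ^ (-α) := by
  have hexp : 1 ≤ exp α := one_le_exp hα
  rw [mul_comm]
  refine norm_invFourier_sub_le hg (integrable_rpow_log_mul_norm hα hg hglog (C := exp α)
    (by fun_prop) (fun u => by linarith [abs_nonneg u])
    (fun u => by nlinarith [abs_nonneg u])) fun u => ?_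
  rw [hxy]
  exact (min_two_mul_le_rpow_log hα (abs_nonneg u) hh).trans_eq (by ring)

lemma norm_invFourier_sub_le_of_abs_sub_eq_two_pow_mul {j : ℕ} (hj : 1 ≤ j) {x y h : ℝ}
    (hh : 0 < h) (hxy : |x - y| = 2 ^ j * h) :
    ‖invFourier g x - invFourier g y‖ ≤
      (j : ℝ) ^ α * ((1 / π) * ∫ u, log (exp α + |u| + 1) ^ α * ‖g u‖) *
        log (exp α + 1 / h) ^ (-α) := by
  have hexp : 1 ≤ exp α := one_le_exp hα
  rw [mul_right_comm]
  refine norm_invFourier_sub_le hg (integrable_rpow_log_mul_norm hα hg hglog (C := exp α + 1)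
    (by fun_prop) (fun u => by linarith [abs_nonneg u])
    (fun u => by nlinarith [abs_nonneg u])) fun u => ?_
  have hlog : log (exp α + 2 ^ j * |u| / 2) ≤ j * log (exp α + |u| + 1) := by
    rw [← log_pow]
    exact log_le_log (by positivity) (add_two_pow_mul_div_two_le_pow hexp (abs_nonneg u) hj)
  calc min 2 (|u| * |x - y|) = min 2 (2 ^ j * |u| * h) := by rw [hxy]; ring_nf
    _ ≤ 2 * log (exp α + 2 ^ j * |u| / 2) ^ α * log (exp α + 1 / h) ^ (-α) :=
      min_two_mul_le_rpow_log hα (by positivity) hh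
    _ ≤ 2 * (j * log (exp α + |u| + 1)) ^ α * log (exp α + 1 / h) ^ (-α) := by
      gcongr
      · exact rpow_nonneg (log_nonneg (by linarith [one_div_pos.2 hh])) _
      · exact log_nonneg (le_add_of_le_of_nonneg hexp (by positivity))
    _ = 2 * ((j : ℝ) ^ α * log (exp α + 1 / h) ^ (-α)) * log (exp α + |u| + 1) ^ α := by
      rw [mul_rpow (by positivity) (log_nonneg (by linarith [abs_nonneg u]))]; ring

end

/-- Lemma 4.2: logarithmic modulus of continuity of the dyadic translates-dilates
`δ_{jk}(x) = 2^{j/2} δ(2^j x − k)` of `δ(x) = (1/2π)∫ e^{ixu} g(u) du`, when `g` has a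
finite logarithmic moment of order `α`. -/
theorem dyadic_translates_log_modulus
    (α : ℝ) (hα : 0 < α)
    (g : ℝ → ℂ) (hg : Integrable g)
    (hglog : Integrable (fun u : ℝ => Real.log (1 + |u|) ^ α * ‖g u‖))
    (δ : ℝ → ℂ)
    (hδ : ∀ x : ℝ, δ x =
      (1 / (2 * (Real.pi : ℂ))) * ∫ u : ℝ, Complex.exp (Complex.I * x * u) * g u)
    (δjk : ℕ → ℤ → ℝ → ℂ)
    (hδjk : ∀ (j : ℕ) (k : ℤ) (x : ℝ),
      δjk j k x = (((2 : ℝ) ^ ((j : ℝ) / 2) : ℝ) : ℂ) * δ ((2 : ℝ) ^ j * x - (k : ℝ)))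
    (R0 R1 : ℝ)
    (hR0 : R0 = (1 / Real.pi) * ∫ u : ℝ, Real.log (Real.exp α + |u| / 2) ^ α * ‖g u‖)
    (hR1 : R1 = (1 / Real.pi) * ∫ u : ℝ, Real.log (Real.exp α + |u| + 1) ^ α * ‖g u‖) :
    (∀ (k : ℤ) (x y : ℝ), x ≠ y →
      ‖δjk 0 k x - δjk 0 k y‖ ≤ R0 * Real.log (Real.exp α + 1 / |x - y|) ^ (-α)) ∧
    ∀ j : ℕ, 1 ≤ j → ∀ (k : ℤ) (x y : ℝ), x ≠ y →
      ‖δjk j k x - δjk j k y‖ ≤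
        (2 : ℝ) ^ ((j : ℝ) / 2) * (j : ℝ) ^ α * R1 *
          Real.log (Real.exp α + 1 / |x - y|) ^ (-α) := by
  obtain rfl : δ = invFourier g := funext hδ
  have hdilate (j : ℕ) (k : ℤ) (x y : ℝ) : ‖δjk j k x - δjk j k y‖ =
      2 ^ ((j : ℝ) / 2) * ‖invFourier g (2 ^ j * x - k) - invFourier g (2 ^ j * y - k)‖ := by
    rw [hδjk, hδjk, ← mul_sub, norm_mul, Complex.norm_real, Real.norm_of_nonneg (by positivity)]
  have hdist (j : ℕ) (k : ℤ) (x y : ℝ) :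
      |(2 ^ j * x - k) - (2 ^ j * y - k)| = 2 ^ j * |x - y| := by
    rw [sub_sub_sub_cancel_right, ← mul_sub, abs_mul, abs_of_pos (by positivity)]
  refine ⟨fun k x y hxy => ?_, fun j hj k x y hxy => ?_⟩ <;>
    have hpos : 0 < |x - y| := abs_pos.2 (sub_ne_zero.2 hxy)
  · rw [hdilate, hR0]
    simpa using norm_invFourier_sub_le_of_abs_sub_eq hα.le hg hglog hpos
      ((hdist 0 k x y).trans (one_mul _))
  · rw [hdilate, hR1, mul_assoc, mul_assoc, mul_assoc]
    gcongr
    simpa only [mul_assoc] using norm_invFourier_sub_le_of_abs_sub_eq_two_pow_mul hα.le hg hglog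
      hj hpos (hdist j k x y)
end

section
/- Let κ > 0, K > 0 and let ψ̂ : ℝ → ℂ satisfy ψ̂(0) = 0 and |ψ̂(u) − ψ̂(v)| ≤ K|u − v|^κ for all u, v ∈ ℝ. Let G ∈ L¹(ℝ², ℂ) satisfy ∫_ℝ ∫_ℝ |G(z,w)| |z|^κ |w|^κ dz dw < ∞, and define R(u,v) = (1/4π²) ∫_ℝ ∫_ℝ G(z,w) e^{izu} e^{iwv} dz dw. Let ψ ∈ L¹(ℝ) ∩ L²(ℝ) have Fourier transform ψ̂ (convention ψ̂(y) = ∫_ℝ e^{−iyx} ψ(x) dx), and set ψ_{jk}(x) = 2^{j/2} ψ(2^j x − k). Then for all j ∈ ℕ₀ and all k, l ∈ ℤ, |∫_ℝ ∫_ℝ R(u,v) conj(ψ_{jk}(u)) ψ_{jl}(v) du dv| ≤ (K² / (4π² · 2^{j(1+2κ)})) ∫_ℝ ∫_ℝ |G(z,w)| |z|^κ |w|^κ dz dw. -/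
/-!
Fubini moves both Fourier integrals in `R` onto the wavelets: the covariance becomes
`(4π²)⁻¹ ∫∫ G(z,w) Φ(z) Ψ(w) dz dw`, where `Φ` and `Ψ` are the Fourier transforms of
`conj ψ_{jk}` and `ψ_{jl}`. Dilation by `2^j` gives `|Ψ(w)| = 2^{-j/2} |ψ̂(-w/2^j)|` (and likewise
for `Φ`), while `ψ̂(0) = 0` and the Hölder bound give `|ψ̂(y)| ≤ K|y|^κ`; hence both
transforms are at most `K 2^{-j(1/2+κ)} |·|^κ`, and multiplying
the two bounds under the integral gives the estimate.
-/

open MeasureTheory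

section
open Complex ComplexConjugate

/-- With this sign convention, the paper's `ψ̂ y` is `expTransform ψ (-y)`. -/
noncomputable def expTransform (f : ℝ → ℂ) (z : ℝ) : ℂ := ∫ x : ℝ, exp (I * z * x) * f x

lemma norm_exp_I_mul_mul (x y : ℝ) : ‖exp (I * x * y)‖ = 1 := by
  rw [norm_exp]; simp

lemma norm_expTransform_le (f : ℝ → ℂ) (z : ℝ) : ‖expTransform f z‖ ≤ ∫ x : ℝ, ‖f x‖ :=
  (norm_integral_le_integral_norm _).trans_eq <| by
    simp only [norm_mul, norm_exp_I_mul_mul, one_mul]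

lemma continuous_expTransform {f : ℝ → ℂ} (hf : Integrable f) : Continuous (expTransform f) :=
  continuous_of_dominated (bound := fun x => ‖f x‖)
    (fun _ => (Continuous.aestronglyMeasurable (by fun_prop)).mul hf.1)
    (fun z => .of_forall fun x => by rw [norm_mul, norm_exp_I_mul_mul, one_mul])
    hf.norm (.of_forall fun _ => by fun_prop)

lemma expTransform_const_mul (c : ℂ) (f : ℝ → ℂ) (z : ℝ) :
    expTransform (fun x => c * f x) z = c * expTransform f z := by
  rw [expTransform, expTransform, ← integral_const_mul]
  congr 1; ext x; ring

lemma expTransform_conj (f : ℝ → ℂ) (z : ℝ) :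
    expTransform (fun x => conj (f x)) z = conj (expTransform f (-z)) := by
  rw [expTransform, expTransform, ← integral_conj]
  congr 1; ext x
  rw [map_mul, ← exp_conj]
  simp only [map_mul, map_neg, conj_I, conj_ofReal, ofReal_neg]
  ring_nf

lemma expTransform_comp_mul_sub (f : ℝ → ℂ) {T : ℝ} (hT : 0 < T) (a z : ℝ) :
    expTransform (fun x => f (T * x - a)) z
      = T⁻¹ * exp (I * z * (a / T : ℝ)) * expTransform f (z / T) := by
  let g : ℝ → ℂ := fun y => exp (I * z * ((y + a) / T : ℝ)) * f y
  have h_eq : (fun x : ℝ => exp (I * z * x) * f (T * x - a)) = fun x => g (T * x - a) := by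
    ext x; simp only [g]; congr; field_simp; ring
  rw [expTransform, h_eq, Measure.integral_comp_mul_left (fun y => g (y - a)),
    integral_sub_right_eq_self g a, abs_of_pos (inv_pos.2 hT), expTransform, mul_assoc,
    Complex.real_smul, ofReal_inv, ← integral_const_mul (exp (I * z * (a / T : ℝ)))]
  congr 2; ext y
  simp only [g, ← mul_assoc, ← exp_add]
  congr 2
  push_cast
  field_simp
  ring

lemma norm_expTransform_comp_mul_sub_le {f : ℝ → ℂ} {K κ : ℝ}
    (hf : ∀ y, ‖expTransform f y‖ ≤ K * |y| ^ κ) {T : ℝ} (hT : 0 < T) (a z : ℝ) :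
    ‖expTransform (fun x => f (T * x - a)) z‖ ≤ K * T ^ (-(1 + κ)) * |z| ^ κ := by
  rw [expTransform_comp_mul_sub f hT, norm_mul, norm_mul, norm_exp_I_mul_mul, mul_one,
    norm_real, Real.norm_of_nonneg (inv_nonneg.2 hT.le)]
  calc T⁻¹ * ‖expTransform f (z / T)‖ ≤ T⁻¹ * (K * |z / T| ^ κ) := by gcongr; exact hf _
    _ = K * T ^ (-(1 + κ)) * |z| ^ κ := by
      rw [abs_div, abs_of_pos hT, Real.div_rpow (abs_nonneg z) hT.le, neg_add,
        Real.rpow_add hT, Real.rpow_neg_one, Real.rpow_neg hT.le]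
      ring

lemma norm_expTransform_wavelet_le {f : ℝ → ℂ} {K κ : ℝ}
    (hf : ∀ y, ‖expTransform f y‖ ≤ K * |y| ^ κ) (j : ℕ) (k : ℤ) (z : ℝ) :
    ‖expTransform (fun x => (((2 : ℝ) ^ ((j : ℝ) / 2) : ℝ) : ℂ) * f ((2 : ℝ) ^ j * x - k)) z‖
      ≤ K * (2 : ℝ) ^ (-(j : ℝ) * (2⁻¹ + κ)) * |z| ^ κ := by
  rw [expTransform_const_mul, norm_mul, norm_real, Real.norm_of_nonneg (by positivity)]
  calc (2 : ℝ) ^ ((j : ℝ) / 2) * ‖expTransform (fun x => f ((2 : ℝ) ^ j * x - k)) z‖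
      ≤ (2 : ℝ) ^ ((j : ℝ) / 2) * (K * ((2 : ℝ) ^ j) ^ (-(1 + κ)) * |z| ^ κ) := by
        gcongr; exact norm_expTransform_comp_mul_sub_le hf (by positivity) _ _
    _ = K * (2 : ℝ) ^ (-(j : ℝ) * (2⁻¹ + κ)) * |z| ^ κ := by
      rw [← Real.rpow_natCast, ← Real.rpow_mul zero_le_two, mul_left_comm, ← mul_assoc,
        mul_assoc K, ← Real.rpow_add zero_lt_two]
      ring_nf

lemma MeasureTheory.Integrable.mul_exp_I_mul_mul {α : Type*} [MeasurableSpace α] {μ : Measure α}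
    {F : α → ℂ} (hF : Integrable F μ) {a b : α → ℝ} (ha : Measurable a) (hb : Measurable b) :
    Integrable (fun q => F q * exp (I * a q * b q)) μ :=
  hF.mul_bdd (c := 1) (Measurable.aestronglyMeasurable (by fun_prop))
    (.of_forall fun q => (norm_exp_I_mul_mul _ _).le)

lemma integral_mul_integral_exp_eq {α : Type*} [MeasurableSpace α] {μ : Measure α} [SFinite μ]
    {H : α → ℂ} (hH : Integrable H μ) {φ : α → ℝ} (hφ : Measurable φ)
    {f : ℝ → ℂ} (hf : Integrable f) :
    ∫ u : ℝ, f u * ∫ p, H p * exp (I * φ p * u) ∂μ = ∫ p, H p * expTransform f (φ p) ∂μ := by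
  have hint : Integrable (Function.uncurry fun (u : ℝ) p => f u * (H p * exp (I * φ p * u)))
      (volume.prod μ) := by
    refine ((hf.mul_prod hH).mul_exp_I_mul_mul (hφ.comp measurable_snd) measurable_fst).congr
      (.of_forall fun q => ?_)
    simp only [Function.uncurry, Function.comp_apply, mul_assoc]
  simp_rw [← integral_const_mul (f _)]
  rw [integral_integral_swap hint]
  congr 1; ext p
  rw [expTransform, ← integral_const_mul]
  congr 1; ext u; ring

lemma integral_integral_fourier_mul_mul {G : ℝ × ℝ → ℂ} (hG : Integrable G)
    {f g : ℝ → ℂ} (hf : Integrable f) (hg : Integrable g) :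
    ∫ u : ℝ, ∫ v : ℝ,
        (∫ p : ℝ × ℝ, G p * exp (I * p.1 * u) * exp (I * p.2 * v)) * f u * g v
      = ∫ p : ℝ × ℝ, G p * expTransform f p.1 * expTransform g p.2 := by
  have hGB : Integrable (fun p : ℝ × ℝ => G p * expTransform g p.2) :=
    hG.mul_bdd ((continuous_expTransform hg).comp continuous_snd).aestronglyMeasurable
      (.of_forall fun p => norm_expTransform_le g p.2)
  have h_inner : ∀ u : ℝ, ∫ v : ℝ,
      (∫ p : ℝ × ℝ, G p * exp (I * p.1 * u) * exp (I * p.2 * v)) * f u * g v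
      = f u * ∫ p : ℝ × ℝ, G p * expTransform g p.2 * exp (I * p.1 * u) := by
    intro u
    have h := integral_mul_integral_exp_eq
      (hG.mul_exp_I_mul_mul measurable_fst (measurable_const (a := u))) measurable_snd hg
    calc _ = f u * ∫ v : ℝ, g v *
          ∫ p : ℝ × ℝ, G p * exp (I * p.1 * u) * exp (I * p.2 * v) := by
          rw [← integral_const_mul]; congr 1; ext v; ring
      _ = _ := by rw [h]; congr 2; ext p; ring
  simp_rw [h_inner]
  rw [integral_mul_integral_exp_eq hGB measurable_fst hf]
  congr 1; ext p; ring

lemma norm_integral_mul_mul_le {G : ℝ × ℝ → ℂ} {A B : ℝ → ℂ} {a b κ : ℝ}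
    (hA : ∀ z, ‖A z‖ ≤ a * |z| ^ κ) (hB : ∀ w, ‖B w‖ ≤ b * |w| ^ κ)
    (hGmom : Integrable (fun p : ℝ × ℝ => ‖G p‖ * |p.1| ^ κ * |p.2| ^ κ)) :
    ‖∫ p : ℝ × ℝ, G p * A p.1 * B p.2‖ ≤ a * b * ∫ p : ℝ × ℝ, ‖G p‖ * |p.1| ^ κ * |p.2| ^ κ := by
  rw [← integral_const_mul]
  refine (norm_integral_le_integral_norm _).trans <| integral_mono_of_nonneg
    (.of_forall fun _ => norm_nonneg _) (hGmom.const_mul _) (.of_forall fun p => ?_)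
  calc ‖G p * A p.1 * B p.2‖ = ‖G p‖ * ‖A p.1‖ * ‖B p.2‖ := by rw [norm_mul, norm_mul]
    _ ≤ ‖G p‖ * (a * |p.1| ^ κ) * (b * |p.2| ^ κ) := by
      gcongr
      exacts [mul_nonneg (norm_nonneg _) ((norm_nonneg _).trans (hA _)), hA _, hB _]
    _ = a * b * (‖G p‖ * |p.1| ^ κ * |p.2| ^ κ) := by ring

end

theorem covariance_wavelet_coefficient_decay_general
    (κ K : ℝ)
    (ψh : ℝ → ℂ) (hψh0 : ψh 0 = 0)
    (hψhLip : ∀ u v : ℝ, ‖ψh u - ψh v‖ ≤ K * |u - v| ^ κ)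
    (G : ℝ × ℝ → ℂ) (hG : Integrable G)
    (hGmom : Integrable (fun p : ℝ × ℝ => ‖G p‖ * |p.1| ^ κ * |p.2| ^ κ))
    (R : ℝ → ℝ → ℂ)
    (hR : ∀ u v : ℝ, R u v = (1 / (4 * (Real.pi : ℂ) ^ 2)) *
      ∫ p : ℝ × ℝ, G p * Complex.exp (Complex.I * p.1 * u) * Complex.exp (Complex.I * p.2 * v))
    (ψ : ℝ → ℂ) (hψ1 : Integrable ψ)
    (hψhat : ∀ y : ℝ, ψh y = ∫ x : ℝ, Complex.exp (-(Complex.I * y * x)) * ψ x)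
    (ψjk : ℕ → ℤ → ℝ → ℂ)
    (hψjk : ∀ (j : ℕ) (k : ℤ) (x : ℝ),
      ψjk j k x = (((2 : ℝ) ^ ((j : ℝ) / 2) : ℝ) : ℂ) * ψ ((2 : ℝ) ^ j * x - (k : ℝ)))
    (j : ℕ) (k l : ℤ) :
    ‖∫ u : ℝ, ∫ v : ℝ, R u v * (starRingEnd ℂ) (ψjk j k u) * ψjk j l v‖ ≤
      K ^ 2 / (4 * Real.pi ^ 2 * (2 : ℝ) ^ ((j : ℝ) * (1 + 2 * κ))) *
        ∫ p : ℝ × ℝ, ‖G p‖ * |p.1| ^ κ * |p.2| ^ κ := by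
  have hψ_holder : ∀ y, ‖expTransform ψ y‖ ≤ K * |y| ^ κ := fun y => by
    have h : expTransform ψ y = ψh (-y) := by
      rw [hψhat, expTransform]; push_cast; ring_nf
    simpa [h, hψh0, abs_neg] using hψhLip (-y) 0
  have hψjk_eq : ∀ m : ℤ, ψjk j m
      = fun x => (((2 : ℝ) ^ ((j : ℝ) / 2) : ℝ) : ℂ) * ψ ((2 : ℝ) ^ j * x - m) :=
    fun m => funext (hψjk j m)
  have hψjk_int : ∀ m : ℤ, Integrable (ψjk j m) := fun m => by
    rw [hψjk_eq]
    exact ((hψ1.comp_sub_right _).comp_mul_left' (by positivity)).const_mul _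
  set C : ℝ := K * (2 : ℝ) ^ (-(j : ℝ) * (2⁻¹ + κ))
  have hA : ∀ z, ‖expTransform (fun u => starRingEnd ℂ (ψjk j k u)) z‖ ≤ C * |z| ^ κ := fun z => by
    rw [expTransform_conj, RCLike.norm_conj, ← abs_neg z, hψjk_eq]
    exact norm_expTransform_wavelet_le hψ_holder j k (-z)
  have hB : ∀ w, ‖expTransform (ψjk j l) w‖ ≤ C * |w| ^ κ := by
    rw [hψjk_eq]; exact norm_expTransform_wavelet_le hψ_holder j l
  have hcov : ∫ u : ℝ, ∫ v : ℝ, R u v * starRingEnd ℂ (ψjk j k u) * ψjk j l v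
      = 1 / (4 * (Real.pi : ℂ) ^ 2) * ∫ p : ℝ × ℝ, G p *
          expTransform (fun u => starRingEnd ℂ (ψjk j k u)) p.1 * expTransform (ψjk j l) p.2 := by
    simp_rw [hR, mul_assoc (1 / _ : ℂ), integral_const_mul]
    exact congrArg _ (integral_integral_fourier_mul_mul hG
      (Complex.conjLIE.integrable_comp_iff.2 (hψjk_int k)) (hψjk_int l))
  have h_const : ‖(1 / (4 * (Real.pi : ℂ) ^ 2))‖ = 1 / (4 * Real.pi ^ 2) := by
    simp [abs_of_pos Real.pi_pos]
  have h_scale : C * C = K ^ 2 * ((2 : ℝ) ^ ((j : ℝ) * (1 + 2 * κ)))⁻¹ := by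
    rw [mul_mul_mul_comm, ← Real.rpow_add zero_lt_two, ← Real.rpow_neg zero_le_two]
    ring_nf
  rw [hcov, norm_mul, h_const]
  calc _ ≤ 1 / (4 * Real.pi ^ 2) * (C * C * ∫ p : ℝ × ℝ, ‖G p‖ * |p.1| ^ κ * |p.2| ^ κ) := by
        gcongr; exact norm_integral_mul_mul_le hA hB hGmom
    _ = _ := by rw [h_scale]; field_simp

/-- Example 5.1 (deterministic form): if `ψ̂` is `κ`-Lipschitz with `ψ̂(0) = 0` and
`R(u,v) = (1/4π²)∫∫ G(z,w) e^{izu} e^{iwv} dz dw`, then the wavelet-coefficient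
covariances `∫∫ R(u,v) conj(ψ_{jk}(u)) ψ_{jl}(v) du dv` decay like `2^{−j(1+2κ)}`. -/
theorem covariance_wavelet_coefficient_decay
    (κ K : ℝ) (hκ : 0 < κ) (hK : 0 < K)
    (ψh : ℝ → ℂ) (hψh0 : ψh 0 = 0)
    (hψhLip : ∀ u v : ℝ, ‖ψh u - ψh v‖ ≤ K * |u - v| ^ κ)
    (G : ℝ × ℝ → ℂ) (hG : Integrable G)
    (hGmom : Integrable (fun p : ℝ × ℝ => ‖G p‖ * |p.1| ^ κ * |p.2| ^ κ))
    (R : ℝ → ℝ → ℂ)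
    (hR : ∀ u v : ℝ, R u v = (1 / (4 * (Real.pi : ℂ) ^ 2)) *
      ∫ p : ℝ × ℝ, G p * Complex.exp (Complex.I * p.1 * u) * Complex.exp (Complex.I * p.2 * v))
    (ψ : ℝ → ℂ) (hψ1 : Integrable ψ) (hψ2 : MemLp ψ 2 (volume : Measure ℝ))
    (hψhat : ∀ y : ℝ, ψh y = ∫ x : ℝ, Complex.exp (-(Complex.I * y * x)) * ψ x)
    (ψjk : ℕ → ℤ → ℝ → ℂ)
    (hψjk : ∀ (j : ℕ) (k : ℤ) (x : ℝ),
      ψjk j k x = (((2 : ℝ) ^ ((j : ℝ) / 2) : ℝ) : ℂ) * ψ ((2 : ℝ) ^ j * x - (k : ℝ)))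
    (j : ℕ) (k l : ℤ) :
    ‖∫ u : ℝ, ∫ v : ℝ, R u v * (starRingEnd ℂ) (ψjk j k u) * ψjk j l v‖ ≤
      K ^ 2 / (4 * Real.pi ^ 2 * (2 : ℝ) ^ ((j : ℝ) * (1 + 2 * κ))) *
        ∫ p : ℝ × ℝ, ‖G p‖ * |p.1| ^ κ * |p.2| ^ κ :=
  covariance_wavelet_coefficient_decay_general κ K ψh hψh0 hψhLip G hG hGmom R hR ψ hψ1 hψhat ψjk
    hψjk j k l
end

section
/- Let κ > 0, K > 0 and let ψ̂ : ℝ → ℂ satisfy ψ̂(0) = 0 and |ψ̂(u) − ψ̂(v)| ≤ K|u − v|^κ for all u, v ∈ ℝ. Let g ∈ L¹(ℝ, ℂ) satisfy ∫_ℝ |g(z)| |z|^{2κ} dz < ∞, and define R(τ) = (1/2π) ∫_ℝ g(z) e^{iτz} dz. Let ψ ∈ L¹(ℝ) ∩ L²(ℝ) have Fourier transform ψ̂ (convention ψ̂(y) = ∫_ℝ e^{−iyx} ψ(x) dx), and set ψ_{jk}(x) = 2^{j/2} ψ(2^j x − k). Then for all j ∈ ℕ₀ and all k, l ∈ ℤ,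 |∫_ℝ ∫_ℝ R(u − v) conj(ψ_{jk}(u)) ψ_{jl}(v) du dv| ≤ (K² / (2π · 2^{j(1+2κ)})) ∫_ℝ |g(z)| |z|^{2κ} dz. -/
/-!
Writing `R` as the inverse Fourier transform of `g` and applying Fubini twice turns the double
integral into `(2π)⁻¹ ∫ g(z) ψ̂_{jl}(z) conj(ψ̂_{jk}(z)) dz`. The Fourier transform of `ψ_{jk}` is
`2^{-j/2} e^{-izk/2^j} ψ̂(z/2^j)`, and Hölder continuity together with `ψ̂(0) = 0` bounds its
modulus by `K 2^{-j(1/2+κ)} |z|^κ`; the product of two such bounds is integrable against `|g|`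
by the moment condition.
-/

open MeasureTheory Complex ComplexConjugate

/-- The Fourier transform with angular frequency, `∫ e^{-iyx} f(x) dx`, as in the paper; Mathlib's
`Real.fourierIntegral` uses `e^{-2πiyx}` instead. -/
noncomputable def fourierAngular (f : ℝ → ℂ) (y : ℝ) : ℂ :=
  ∫ x : ℝ, cexp (-(I * y * x)) * f x

section fourierAngular

variable {f : ℝ → ℂ}

lemma norm_fourierAngular_le (f : ℝ → ℂ) (y : ℝ) : ‖fourierAngular f y‖ ≤ ∫ x, ‖f x‖ :=
  (norm_integral_le_integral_norm _).trans_eq <| by simp [Complex.norm_exp]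

lemma continuous_fourierAngular (hf : Integrable f) : Continuous (fourierAngular f) :=
  continuous_of_dominated
    (fun _ => (by fun_prop : Continuous _).aestronglyMeasurable.mul hf.1)
    (fun _ => ae_of_all _ fun _ => by simp [Complex.norm_exp])
    hf.norm (ae_of_all _ fun _ => by fun_prop)

lemma conj_fourierAngular (f : ℝ → ℂ) (y : ℝ) :
    conj (fourierAngular f y) = ∫ x : ℝ, cexp (I * y * x) * conj (f x) := by
  rw [fourierAngular, ← integral_conj]
  congr 1; funext x
  rw [map_mul, ← Complex.exp_conj]
  simp

lemma fourierAngular_const_mul_comp_affine (c : ℂ) {a : ℝ} (ha : a ≠ 0) (b z : ℝ) :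
    fourierAngular (fun x => c * f (a * x - b)) z =
      c * |a|⁻¹ * cexp (-(I * ((z * b / a : ℝ) : ℂ))) * fourierAngular f (z / a) := by
  set H : ℝ → ℂ := fun w => cexp (-(I * ((z * (w + b) / a : ℝ) : ℂ))) * f w
  have hH : ∀ w, H w = cexp (-(I * ((z * b / a : ℝ) : ℂ))) *
      (cexp (-(I * ((z / a : ℝ) : ℂ) * w)) * f w) := fun w => by
    simp only [H]
    rw [← mul_assoc, ← Complex.exp_add]
    congr 2
    push_cast
    field_simp
    ring
  calc fourierAngular (fun x => c * f (a * x - b)) z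
      = ∫ x, c * H (a * x - b) := by
        unfold fourierAngular
        congr 1; funext x
        simp only [H, sub_add_cancel]
        rw [show z * (a * x) / a = z * x by field_simp]
        push_cast
        ring_nf
    _ = c * (|a⁻¹| • ∫ x, H x) := by
        rw [integral_const_mul, Measure.integral_comp_mul_left (fun x => H (x - b)),
          integral_sub_right_eq_self]
    _ = _ := by
        simp only [hH, integral_const_mul, abs_inv, fourierAngular, Complex.real_smul]
        push_cast
        ring_nf

lemma norm_fourierAngular_const_mul_comp_affine_le {K κ a : ℝ} (ha : 0 < a)
    (hf : ∀ y, ‖fourierAngular f y‖ ≤ K * |y| ^ κ) (c : ℂ) (b z : ℝ) :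
    ‖fourierAngular (fun x => c * f (a * x - b)) z‖ ≤ K * (‖c‖ / a ^ (1 + κ)) * |z| ^ κ := by
  rw [fourierAngular_const_mul_comp_affine c ha.ne' b z]
  have hphase : ‖cexp (-(I * ((z * b / a : ℝ) : ℂ)))‖ = 1 := by simp [Complex.norm_exp]
  calc ‖c * |a|⁻¹ * cexp (-(I * ((z * b / a : ℝ) : ℂ))) * fourierAngular f (z / a)‖
      = ‖c‖ * a⁻¹ * ‖fourierAngular f (z / a)‖ := by
        rw [norm_mul, norm_mul, norm_mul, hphase, abs_of_pos ha,
          Complex.norm_of_nonneg (inv_nonneg.2 ha.le), mul_one]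
    _ ≤ ‖c‖ * a⁻¹ * (K * |z / a| ^ κ) := by gcongr; exact hf _
    _ = K * (‖c‖ / a ^ (1 + κ)) * |z| ^ κ := by
        rw [abs_div, abs_of_pos ha, Real.div_rpow (abs_nonneg z) ha.le, Real.rpow_add ha,
          Real.rpow_one]
        field_simp

end fourierAngular

section covariance

variable {g φ χ : ℝ → ℂ}

lemma integral_integral_cexp_sub_mul (hg : Integrable g) (hχ : Integrable χ) (u : ℝ) :
    ∫ v, (∫ z, g z * cexp (I * ((u - v : ℝ) : ℂ) * z)) * χ v =
      ∫ z, g z * fourierAngular χ z * cexp (I * z * u) := by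
  have hint : Integrable (Function.uncurry fun v z : ℝ =>
      g z * cexp (I * ((u - v : ℝ) : ℂ) * z) * χ v) (volume.prod volume) := by
    refine ((hχ.mul_prod hg).bdd_mul (c := 1) (by fun_prop : Continuous fun p : ℝ × ℝ =>
      cexp (I * ((u - p.1 : ℝ) : ℂ) * p.2)).aestronglyMeasurable
      (ae_of_all _ fun _ => by simp [Complex.norm_exp])).congr (ae_of_all _ fun _ => ?_)
    simp only [Function.uncurry]
    ring
  calc ∫ v, (∫ z, g z * cexp (I * ((u - v : ℝ) : ℂ) * z)) * χ v
      = ∫ z, ∫ v, g z * cexp (I * ((u - v : ℝ) : ℂ) * z) * χ v := by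
        simp_rw [← integral_mul_const]
        exact integral_integral_swap hint
    _ = ∫ z, g z * fourierAngular χ z * cexp (I * z * u) := by
        congr 1; funext z
        rw [fourierAngular, mul_right_comm, ← integral_const_mul]
        congr 1; funext v
        rw [show I * ((u - v : ℝ) : ℂ) * z = I * z * u + -(I * z * v) by push_cast; ring,
          Complex.exp_add]
        ring

lemma integral_conj_mul_integral_cexp {H : ℝ → ℂ} (hφ : Integrable φ) (hH : Integrable H) :
    ∫ u, conj (φ u) * ∫ z, H z * cexp (I * z * u) = ∫ z, H z * conj (fourierAngular φ z) := by
  have hint : Integrable (Function.uncurry fun (u z : ℝ) =>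
      conj (φ u) * (H z * cexp (I * z * u))) (volume.prod volume) := by
    have hφc : Integrable fun u => conj (φ u) :=
      RCLike.conjCLE.toContinuousLinearMap.integrable_comp hφ
    refine ((hφc.mul_prod hH).bdd_mul (c := 1) (by fun_prop : Continuous fun p : ℝ × ℝ =>
      cexp (I * p.2 * p.1)).aestronglyMeasurable
      (ae_of_all _ fun _ => by simp [Complex.norm_exp])).congr (ae_of_all _ fun _ => ?_)
    simp only [Function.uncurry]
    ring
  simp_rw [← integral_const_mul (conj (φ _)), conj_fourierAngular, ← integral_const_mul (H _)]
  rw [integral_integral_swap hint]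
  congr 1; funext z
  congr 1; funext u
  ring

lemma integral_integral_covariance_eq {R : ℝ → ℂ}
    (hR : ∀ τ : ℝ, R τ = (1 / (2 * (Real.pi : ℂ))) * ∫ z : ℝ, g z * cexp (I * τ * z))
    (hg : Integrable g) (hφ : Integrable φ) (hχ : Integrable χ) :
    ∫ u, ∫ v, R (u - v) * conj (φ u) * χ v =
      (1 / (2 * (Real.pi : ℂ))) * ∫ z, g z * fourierAngular χ z * conj (fourierAngular φ z) := by
  have hgχ : Integrable fun z => g z * fourierAngular χ z :=
    hg.mul_bdd (continuous_fourierAngular hχ).aestronglyMeasurable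
      (ae_of_all _ (norm_fourierAngular_le χ))
  calc ∫ u, ∫ v, R (u - v) * conj (φ u) * χ v
      = ∫ u, (1 / (2 * (Real.pi : ℂ))) *
          (conj (φ u) * ∫ v, (∫ z, g z * cexp (I * ((u - v : ℝ) : ℂ) * z)) * χ v) := by
        congr 1; funext u
        rw [← integral_const_mul, ← integral_const_mul]
        congr 1; funext v
        rw [hR]
        ring
    _ = _ := by
        simp_rw [integral_integral_cexp_sub_mul hg hχ]
        rw [integral_const_mul, integral_conj_mul_integral_cexp hφ hgχ]

end covariance

lemma norm_integral_mul_conj_le {g F G : ℝ → ℂ} {C κ : ℝ}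
    (hgmom : Integrable fun z : ℝ => ‖g z‖ * |z| ^ (2 * κ))
    (hF : ∀ z, ‖F z‖ ≤ C * |z| ^ κ) (hG : ∀ z, ‖G z‖ ≤ C * |z| ^ κ) :
    ‖∫ z, g z * F z * conj (G z)‖ ≤ C ^ 2 * ∫ z, ‖g z‖ * |z| ^ (2 * κ) := by
  rw [← integral_const_mul]
  refine norm_integral_le_of_norm_le (hgmom.const_mul _) (ae_of_all _ fun z => ?_)
  calc ‖g z * F z * conj (G z)‖ = ‖g z‖ * (‖F z‖ * ‖G z‖) := by
        rw [norm_mul, norm_mul, RCLike.norm_conj, mul_assoc]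
    _ ≤ ‖g z‖ * ((C * |z| ^ κ) * (C * |z| ^ κ)) := by
        gcongr ‖g z‖ * ?_
        exact mul_le_mul (hF z) (hG z) (norm_nonneg _) ((norm_nonneg _).trans (hF z))
    _ = C ^ 2 * (‖g z‖ * |z| ^ (2 * κ)) := by
        rw [mul_comm 2 κ, Real.rpow_mul (abs_nonneg z), Real.rpow_two]
        ring

lemma sq_two_rpow_half_div_two_pow_rpow (j : ℕ) (κ : ℝ) :
    ((2 : ℝ) ^ ((j : ℝ) / 2) / ((2 : ℝ) ^ j) ^ (1 + κ)) ^ 2 =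
      ((2 : ℝ) ^ ((j : ℝ) * (1 + 2 * κ)))⁻¹ := by
  rw [← Real.rpow_natCast 2 j, ← Real.rpow_mul zero_le_two, ← Real.rpow_sub zero_lt_two,
    ← Real.rpow_natCast, ← Real.rpow_mul zero_le_two, ← Real.rpow_neg zero_le_two]
  ring_nf

theorem stationary_covariance_wavelet_coefficient_decay_general
    (κ K : ℝ)
    (ψh : ℝ → ℂ) (hψh0 : ψh 0 = 0)
    (hψhLip : ∀ u v : ℝ, ‖ψh u - ψh v‖ ≤ K * |u - v| ^ κ)
    (g : ℝ → ℂ) (hg : Integrable g)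
    (hgmom : Integrable (fun z : ℝ => ‖g z‖ * |z| ^ (2 * κ)))
    (R : ℝ → ℂ)
    (hR : ∀ τ : ℝ, R τ = (1 / (2 * (Real.pi : ℂ))) *
      ∫ z : ℝ, g z * Complex.exp (Complex.I * τ * z))
    (ψ : ℝ → ℂ) (hψ1 : Integrable ψ)
    (hψhat : ∀ y : ℝ, ψh y = ∫ x : ℝ, Complex.exp (-(Complex.I * y * x)) * ψ x)
    (ψjk : ℕ → ℤ → ℝ → ℂ)
    (hψjk : ∀ (j : ℕ) (k : ℤ) (x : ℝ),
      ψjk j k x = (((2 : ℝ) ^ ((j : ℝ) / 2) : ℝ) : ℂ) * ψ ((2 : ℝ) ^ j * x - (k : ℝ)))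
    (j : ℕ) (k l : ℤ) :
    ‖∫ u : ℝ, ∫ v : ℝ, R (u - v) * (starRingEnd ℂ) (ψjk j k u) * ψjk j l v‖ ≤
      K ^ 2 / (2 * Real.pi * (2 : ℝ) ^ ((j : ℝ) * (1 + 2 * κ))) *
        ∫ z : ℝ, ‖g z‖ * |z| ^ (2 * κ) := by
  set C := K * ((2 : ℝ) ^ ((j : ℝ) / 2) / ((2 : ℝ) ^ j) ^ (1 + κ))
  have hψ_le (y : ℝ) : ‖fourierAngular ψ y‖ ≤ K * |y| ^ κ := by
    simpa [fourierAngular, ← hψhat, hψh0] using hψhLip y 0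
  have hwavelet (m : ℤ) :
      ψjk j m = fun x => (((2 : ℝ) ^ ((j : ℝ) / 2) : ℝ) : ℂ) * ψ ((2 : ℝ) ^ j * x - m) :=
    funext (hψjk j m)
  have hint (m : ℤ) : Integrable (ψjk j m) := by
    rw [hwavelet]
    exact ((hψ1.comp_sub_right _).comp_mul_left' (by positivity)).const_mul _
  have hψjk_le (m : ℤ) (z : ℝ) : ‖fourierAngular (ψjk j m) z‖ ≤ C * |z| ^ κ := by
    have h := norm_fourierAngular_const_mul_comp_affine_le (pow_pos two_pos j) hψ_le
      (((2 : ℝ) ^ ((j : ℝ) / 2) : ℝ) : ℂ) m z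
    rwa [Complex.norm_of_nonneg (by positivity), ← hwavelet] at h
  have hnorm : ‖1 / (2 * (Real.pi : ℂ))‖ = (2 * Real.pi)⁻¹ := by
    simp [Real.pi_pos.le]
  rw [integral_integral_covariance_eq hR hg (hint k) (hint l), norm_mul, hnorm]
  calc (2 * Real.pi)⁻¹ * ‖∫ z, g z * fourierAngular (ψjk j l) z *
        (starRingEnd ℂ) (fourierAngular (ψjk j k) z)‖
      ≤ (2 * Real.pi)⁻¹ * (C ^ 2 * ∫ z, ‖g z‖ * |z| ^ (2 * κ)) := by
        gcongr
        exact norm_integral_mul_conj_le hgmom (hψjk_le l) (hψjk_le k)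
    _ = _ := by
        rw [mul_pow, sq_two_rpow_half_div_two_pow_rpow]
        field_simp

/-- Example 5.2 (deterministic form): for a stationary covariance
`R(τ) = (1/2π)∫ g(z) e^{iτz} dz` with spectral density `g` having a finite moment of
order `2κ`, and a `κ`-Lipschitz `ψ̂` with `ψ̂(0) = 0`, the wavelet-coefficient
covariances `∫∫ R(u−v) conj(ψ_{jk}(u)) ψ_{jl}(v) du dv` decay like `2^{−j(1+2κ)}`. -/
theorem stationary_covariance_wavelet_coefficient_decay
    (κ K : ℝ) (hκ : 0 < κ) (hK : 0 < K)
    (ψh : ℝ → ℂ) (hψh0 : ψh 0 = 0)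
    (hψhLip : ∀ u v : ℝ, ‖ψh u - ψh v‖ ≤ K * |u - v| ^ κ)
    (g : ℝ → ℂ) (hg : Integrable g)
    (hgmom : Integrable (fun z : ℝ => ‖g z‖ * |z| ^ (2 * κ)))
    (R : ℝ → ℂ)
    (hR : ∀ τ : ℝ, R τ = (1 / (2 * (Real.pi : ℂ))) *
      ∫ z : ℝ, g z * Complex.exp (Complex.I * τ * z))
    (ψ : ℝ → ℂ) (hψ1 : Integrable ψ) (hψ2 : MemLp ψ 2 (volume : Measure ℝ))
    (hψhat : ∀ y : ℝ, ψh y = ∫ x : ℝ, Complex.exp (-(Complex.I * y * x)) * ψ x)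
    (ψjk : ℕ → ℤ → ℝ → ℂ)
    (hψjk : ∀ (j : ℕ) (k : ℤ) (x : ℝ),
      ψjk j k x = (((2 : ℝ) ^ ((j : ℝ) / 2) : ℝ) : ℂ) * ψ ((2 : ℝ) ^ j * x - (k : ℝ)))
    (j : ℕ) (k l : ℤ) :
    ‖∫ u : ℝ, ∫ v : ℝ, R (u - v) * (starRingEnd ℂ) (ψjk j k u) * ψjk j l v‖ ≤
      K ^ 2 / (2 * Real.pi * (2 : ℝ) ^ ((j : ℝ) * (1 + 2 * κ))) *
        ∫ z : ℝ, ‖g z‖ * |z| ^ (2 * κ) :=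
  stationary_covariance_wavelet_coefficient_decay_general κ K ψh hψh0 hψhLip g hg hgmom R hR ψ hψ1
    hψhat ψjk hψjk j k l
end

section
/- Let 0 < α < 2 and define R(t,s) = (1/2)(|t|^α + |s|^α − ||t| − |s||^α) for t, s ∈ ℝ. Let ψ : ℝ → ℂ be measurable with ∫_ℝ ψ(u) du = 0, N := ∫_ℝ |ψ(u)| du < ∞, and c_ψ := ∫_ℝ |u|^α |ψ(u)| du < ∞. Set ψ_{jk}(x) = 2^{j/2} ψ(2^j x − k) and q_α = 1 if α ≤ 1, q_α = 2^{α−1} if α > 1. Then for all j ∈ ℕ₀ and k ∈ ℤ, |∫_ℝ ∫_ℝ R(t,s) conj(ψ_{jk}(t)) ψ_{jk}(s) dt ds| ≤ q_α c_ψ 2^α N / 2^{j(1+α)}. -/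
open MeasureTheory

private lemma aux_add_rpow {α : ℝ} (hα : 0 ≤ α) {x y : ℝ} (hx : 0 ≤ x) (hy : 0 ≤ y) :
    (x + y) ^ α ≤ 2 ^ α * (x ^ α + y ^ α) := by
  have h1 : x + y ≤ 2 * max x y := by
    rcases le_total x y with h | h
    · rw [max_eq_right h]; linarith
    · rw [max_eq_left h]; linarith
  have hm : (0:ℝ) ≤ max x y := le_max_of_le_left hx
  calc (x + y) ^ α ≤ (2 * max x y) ^ α := Real.rpow_le_rpow (by linarith) h1 hα
    _ = 2 ^ α * (max x y) ^ α := Real.mul_rpow (by norm_num) hm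
    _ ≤ 2 ^ α * (x ^ α + y ^ α) := by
        have h3 : (max x y) ^ α ≤ x ^ α + y ^ α := by
          rcases max_cases x y with ⟨h, _⟩ | ⟨h, _⟩ <;> rw [h]
          · nlinarith [Real.rpow_nonneg hy α]
          · nlinarith [Real.rpow_nonneg hx α]
        have h2 : (0:ℝ) ≤ 2 ^ α := Real.rpow_nonneg (by norm_num) α
        nlinarith

private lemma aux_integral_affine {E : Type*} [NormedAddCommGroup E] [NormedSpace ℝ E]
    (f : ℝ → E) (a b : ℝ) :
    (∫ x : ℝ, f (a * x - b)) = |a⁻¹| • ∫ y, f y := by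
  rw [show (∫ x : ℝ, f (a * x - b)) = ∫ x : ℝ, (fun y => f (y - b)) (a * x) from rfl,
    MeasureTheory.Measure.integral_comp_mul_left (fun y => f (y - b)) a,
    integral_sub_right_eq_self f b]

private lemma aux_integrable_affine {E : Type*} [NormedAddCommGroup E]
    {f : ℝ → E} {a : ℝ} (ha : a ≠ 0) (b : ℝ) (hf : Integrable f) :
    Integrable fun x => f (a * x - b) :=
  (integrable_comp_mul_left_iff (fun y => f (y - b)) ha).2 (hf.comp_sub_right b)


set_option maxHeartbeats 1000000 in
/-- Lemma 6.1 (deterministic form): for the fractional Brownian motion covariance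
`R(t,s) = (1/2)(|t|^α + |s|^α − ||t|−|s||^α)` and an m-wavelet `ψ` with
`∫ψ = 0`, `N = ∫|ψ| < ∞`, `c_ψ = ∫|u|^α|ψ(u)| du < ∞`, the second moment of the
wavelet coefficient satisfies `|∫∫ R(t,s) conj(ψ_{jk}(t)) ψ_{jk}(s) dt ds| ≤
q_α c_ψ 2^α N / 2^{j(1+α)}`. -/
theorem fbm_wavelet_coefficient_bound
    (α : ℝ) (hα : 0 < α) (hα2 : α < 2)
    (R : ℝ → ℝ → ℝ)
    (hR : ∀ t s : ℝ, R t s = (1 / 2) * (|t| ^ α + |s| ^ α - |(|t| - |s|)| ^ α))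
    (ψ : ℝ → ℂ) (hψmeas : Measurable ψ)
    (hψ0 : (∫ u : ℝ, ψ u) = 0)
    (hψint : Integrable ψ)
    (hψmom : Integrable (fun u : ℝ => |u| ^ α * ‖ψ u‖))
    (N cψ qα : ℝ)
    (hN : N = ∫ u : ℝ, ‖ψ u‖)
    (hcψ : cψ = ∫ u : ℝ, |u| ^ α * ‖ψ u‖)
    (hqα : qα = if α ≤ 1 then 1 else 2 ^ (α - 1))
    (ψjk : ℕ → ℤ → ℝ → ℂ)
    (hψjk : ∀ (j : ℕ) (k : ℤ) (x : ℝ),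
      ψjk j k x = (((2 : ℝ) ^ ((j : ℝ) / 2) : ℝ) : ℂ) * ψ ((2 : ℝ) ^ j * x - (k : ℝ)))
    (j : ℕ) (k : ℤ) :
    ‖∫ t : ℝ, ∫ s : ℝ, ((R t s : ℝ) : ℂ) * (starRingEnd ℂ) (ψjk j k t) * ψjk j k s‖ ≤
      qα * cψ * 2 ^ α * N / (2 : ℝ) ^ ((j : ℝ) * (1 + α)) := by
  have h2 : (0:ℝ) < 2 := by norm_num
  set a : ℝ := (2:ℝ) ^ j with ha_def
  have ha : 0 < a := by positivity
  set c0 : ℝ := (2:ℝ) ^ ((j:ℝ) / 2) with hc0_def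
  have hc0 : 0 < c0 := Real.rpow_pos_of_pos h2 _
  set c : ℝ := (k:ℝ) / a with hc_def
  set g : ℝ → ℂ := fun x => ((c0 : ℝ) : ℂ) * ψ (a * x - (k:ℝ)) with hg_def
  have hgjk : ψjk j k = g := funext fun x => hψjk j k x
  rw [hgjk]
  -- basic facts about g
  have hg_meas : Measurable g := by rw [hg_def]; fun_prop
  have hψa_int : Integrable fun x => ψ (a * x - (k:ℝ)) := aux_integrable_affine ha.ne' _ hψint
  have hg_int : Integrable g := hψa_int.const_mul _
  have hg0 : (∫ x, g x) = 0 := by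
    rw [hg_def]
    rw [integral_const_mul]
    have h1 : (∫ x : ℝ, ψ (a * x - (k:ℝ))) = |a⁻¹| • ∫ y, ψ y := aux_integral_affine ψ a k
    rw [h1, hψ0, smul_zero, mul_zero]
  have hconj_meas : Measurable fun x => (starRingEnd ℂ) (g x) :=
    (RCLike.continuous_conj (K := ℂ)).measurable.comp hg_meas
  have hconj_int : Integrable fun x => (starRingEnd ℂ) (g x) := by
    refine ⟨(RCLike.continuous_conj (K := ℂ)).comp_aestronglyMeasurable hg_int.1, ?_⟩
    simpa [HasFiniteIntegral] using hg_int.2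
  have hgnorm_eq : ∀ x, ‖g x‖ = c0 * ‖ψ (a * x - (k:ℝ))‖ := by
    intro x
    rw [hg_def]
    simp [abs_of_pos hc0]
  have hInorm : Integrable fun x => ‖g x‖ := hg_int.norm
  -- the two key single integrals
  set Ig : ℝ := ∫ x, ‖g x‖ with hIg_def
  have hIg0 : 0 ≤ Ig := integral_nonneg fun x => norm_nonneg _
  have hIg_val : Ig = c0 * (a⁻¹ * N) := by
    rw [hIg_def]
    calc (∫ x, ‖g x‖) = ∫ x, c0 * ‖ψ (a * x - (k:ℝ))‖ := by
          exact integral_congr_ae (Filter.Eventually.of_forall hgnorm_eq)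
      _ = c0 * ∫ x, ‖ψ (a * x - (k:ℝ))‖ := integral_const_mul _ _
      _ = c0 * (|a⁻¹| • ∫ u, ‖ψ u‖) := by
          rw [aux_integral_affine (fun u => ‖ψ u‖) a k]
      _ = c0 * (a⁻¹ * N) := by
          rw [smul_eq_mul, abs_of_pos (inv_pos.2 ha), hN]
  -- moment integral of g
  have hxc : ∀ x : ℝ, |x - c| ^ α * ‖g x‖
      = (a⁻¹) ^ α * c0 * (|a * x - (k:ℝ)| ^ α * ‖ψ (a * x - (k:ℝ))‖) := by
    intro x
    have h1 : x - c = (a * x - (k:ℝ)) / a := by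
      rw [hc_def]; field_simp
    have h2 : |x - c| ^ α = |a * x - (k:ℝ)| ^ α / a ^ α := by
      rw [h1, abs_div, abs_of_pos ha, Real.div_rpow (abs_nonneg _) ha.le]
    rw [h2, hgnorm_eq x, Real.inv_rpow ha.le]
    field_simp
  have hmomg_eq : (fun x => |x - c| ^ α * ‖g x‖)
      = fun x => (a⁻¹) ^ α * c0 * (|a * x - (k:ℝ)| ^ α * ‖ψ (a * x - (k:ℝ))‖) :=
    funext hxc
  have hmom_comp : Integrable fun x => |a * x - (k:ℝ)| ^ α * ‖ψ (a * x - (k:ℝ))‖ :=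
    aux_integrable_affine ha.ne' _ hψmom
  have hmomg_int : Integrable fun x => |x - c| ^ α * ‖g x‖ := by
    rw [hmomg_eq]
    exact hmom_comp.const_mul _
  set Cg : ℝ := ∫ x, |x - c| ^ α * ‖g x‖ with hCg_def
  have hCg0 : 0 ≤ Cg :=
    integral_nonneg fun x => mul_nonneg (Real.rpow_nonneg (abs_nonneg _) _) (norm_nonneg _)
  have hCg_val : Cg = (a⁻¹) ^ α * c0 * (a⁻¹ * cψ) := by
    rw [hCg_def, hmomg_eq, integral_const_mul]
    have h1 : (∫ x : ℝ, |a * x - (k:ℝ)| ^ α * ‖ψ (a * x - (k:ℝ))‖)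
        = |a⁻¹| • ∫ u, |u| ^ α * ‖ψ u‖ := aux_integral_affine (fun u => |u| ^ α * ‖ψ u‖) a k
    rw [h1, smul_eq_mul, abs_of_pos (inv_pos.2 ha), hcψ]
  -- kernel bound
  have hker : ∀ t s : ℝ, |(|t| - |s|)| ^ α ≤ 2 ^ α * (|t - c| ^ α + |s - c| ^ α) := by
    intro t s
    have h1 : |(|t| - |s|)| ≤ |t - s| := abs_abs_sub_abs_le_abs_sub t s
    have h2 : |t - s| ≤ |t - c| + |s - c| := by
      have h3 := abs_sub_le t c s
      rw [abs_sub_comm c s] at h3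
      exact h3
    calc |(|t| - |s|)| ^ α ≤ (|t - c| + |s - c|) ^ α :=
          Real.rpow_le_rpow (abs_nonneg _) (h1.trans h2) hα.le
      _ ≤ 2 ^ α * (|t - c| ^ α + |s - c| ^ α) :=
          aux_add_rpow hα.le (abs_nonneg _) (abs_nonneg _)
  -- integrability of complex integrands in s
  have hofReal : Measurable ((↑) : ℝ → ℂ) := Complex.measurable_ofReal
  have hKg_int : ∀ t : ℝ, Integrable fun s => ((|(|t| - |s|)| ^ α : ℝ) : ℂ) * g s := by
    intro t
    refine Integrable.mono'
      ((hInorm.const_mul (2 ^ α * |t - c| ^ α)).add (hmomg_int.const_mul (2 ^ α))) ?_ ?_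
    · exact ((hofReal.comp (by fun_prop)).mul hg_meas).aestronglyMeasurable
    · filter_upwards with s
      rw [norm_mul, Complex.norm_real, Real.norm_eq_abs, abs_of_nonneg (Real.rpow_nonneg (abs_nonneg _) _)]
      have h1 := hker t s
      have h2 : (0:ℝ) ≤ ‖g s‖ := norm_nonneg _
      have h3 : (0:ℝ) ≤ 2 ^ α := Real.rpow_nonneg (by norm_num) α
      simp only [Pi.add_apply]
      nlinarith [mul_le_mul_of_nonneg_right h1 h2]
  have hsabs : ∀ s : ℝ, |s| ^ α ≤ 2 ^ α * (|s - c| ^ α + |c| ^ α) := by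
    intro s
    have h1 : |s| ≤ |s - c| + |c| := by
      calc |s| = |(s - c) + c| := by ring_nf
        _ ≤ |s - c| + |c| := abs_add_le _ _
    calc |s| ^ α ≤ (|s - c| + |c|) ^ α := Real.rpow_le_rpow (abs_nonneg _) h1 hα.le
      _ ≤ 2 ^ α * (|s - c| ^ α + |c| ^ α) := aux_add_rpow hα.le (abs_nonneg _) (abs_nonneg _)
  have hMint : Integrable fun s => ((|s| ^ α : ℝ) : ℂ) * g s := by
    refine Integrable.mono'
      ((hmomg_int.const_mul (2 ^ α)).add (hInorm.const_mul (2 ^ α * |c| ^ α))) ?_ ?_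
    · exact ((hofReal.comp (by fun_prop)).mul hg_meas).aestronglyMeasurable
    · filter_upwards with s
      rw [norm_mul, Complex.norm_real, Real.norm_eq_abs, abs_of_nonneg (Real.rpow_nonneg (abs_nonneg _) _)]
      have h1 := hsabs s
      have h2 : (0:ℝ) ≤ ‖g s‖ := norm_nonneg _
      have h3 : (0:ℝ) ≤ 2 ^ α := Real.rpow_nonneg (by norm_num) α
      simp only [Pi.add_apply]
      nlinarith [mul_le_mul_of_nonneg_right h1 h2]
  -- inner integral identity
  have hinner : ∀ t : ℝ, (∫ s, ((R t s : ℝ) : ℂ) * (starRingEnd ℂ) (g t) * g s)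
      = (starRingEnd ℂ) (g t) * ((1 / 2 : ℂ) *
          ((∫ s, ((|s| ^ α : ℝ) : ℂ) * g s) - ∫ s, ((|(|t| - |s|)| ^ α : ℝ) : ℂ) * g s)) := by
    intro t
    have hpt : ∀ s : ℝ, ((R t s : ℝ) : ℂ) * (starRingEnd ℂ) (g t) * g s
        = (starRingEnd ℂ) (g t) * ((1 / 2 : ℂ) *
            (((|t| ^ α : ℝ) : ℂ) * g s + ((|s| ^ α : ℝ) : ℂ) * g s
              - ((|(|t| - |s|)| ^ α : ℝ) : ℂ) * g s)) := by
      intro s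
      rw [hR]
      push_cast
      ring
    rw [integral_congr_ae (Filter.Eventually.of_forall hpt)]
    have i1 : Integrable fun s => ((|t| ^ α : ℝ) : ℂ) * g s := hg_int.const_mul _
    have i12 : Integrable fun s => ((|t| ^ α : ℝ) : ℂ) * g s + ((|s| ^ α : ℝ) : ℂ) * g s :=
      i1.add hMint
    rw [integral_const_mul, integral_const_mul,
      integral_sub i12 (hKg_int t), integral_add i1 hMint,
      integral_const_mul, hg0, mul_zero, zero_add]
  -- measurability of the parametrized integral
  have hG_meas : StronglyMeasurable fun t : ℝ => ∫ s, ((|(|t| - |s|)| ^ α : ℝ) : ℂ) * g s := by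
    apply StronglyMeasurable.integral_prod_right'
      (f := fun p : ℝ × ℝ => ((|(|p.1| - |p.2|)| ^ α : ℝ) : ℂ) * g p.2)
    exact ((hofReal.comp (by fun_prop)).mul (hg_meas.comp measurable_snd)).stronglyMeasurable
  -- bound on the inner kernel integral
  have hGbound : ∀ t : ℝ, ‖∫ s, ((|(|t| - |s|)| ^ α : ℝ) : ℂ) * g s‖
      ≤ 2 ^ α * (|t - c| ^ α * Ig + Cg) := by
    intro t
    have hbd2 : Integrable fun s : ℝ => 2 ^ α * |t - c| ^ α * ‖g s‖ + 2 ^ α * (|s - c| ^ α * ‖g s‖) :=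
      (hInorm.const_mul _).add (hmomg_int.const_mul _)
    calc ‖∫ s, ((|(|t| - |s|)| ^ α : ℝ) : ℂ) * g s‖
        ≤ ∫ s, ‖((|(|t| - |s|)| ^ α : ℝ) : ℂ) * g s‖ := norm_integral_le_integral_norm _
      _ = ∫ s, |(|t| - |s|)| ^ α * ‖g s‖ := by
          apply integral_congr_ae
          filter_upwards with s
          rw [norm_mul, Complex.norm_real, Real.norm_eq_abs,
            abs_of_nonneg (Real.rpow_nonneg (abs_nonneg _) _)]
      _ ≤ ∫ s, (2 ^ α * |t - c| ^ α * ‖g s‖ + 2 ^ α * (|s - c| ^ α * ‖g s‖)) := by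
          apply integral_mono_of_nonneg
          · filter_upwards with s
            positivity
          · exact hbd2
          · filter_upwards with s
            have h1 := mul_le_mul_of_nonneg_right (hker t s) (norm_nonneg (g s))
            nlinarith
      _ = 2 ^ α * (|t - c| ^ α * Ig + Cg) := by
          rw [integral_add (hInorm.const_mul _) (hmomg_int.const_mul _),
            integral_const_mul, integral_const_mul, ← hIg_def, ← hCg_def]
          ring
  -- pointwise bound for the outer integrand
  have hptb : ∀ t : ℝ, ‖(starRingEnd ℂ) (g t) * ∫ s, ((|(|t| - |s|)| ^ α : ℝ) : ℂ) * g s‖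
      ≤ (2 ^ α * Ig) * (|t - c| ^ α * ‖g t‖) + (2 ^ α * Cg) * ‖g t‖ := by
    intro t
    calc ‖(starRingEnd ℂ) (g t) * ∫ s, ((|(|t| - |s|)| ^ α : ℝ) : ℂ) * g s‖
        = ‖g t‖ * ‖∫ s, ((|(|t| - |s|)| ^ α : ℝ) : ℂ) * g s‖ := by
          rw [norm_mul, RCLike.norm_conj]
      _ ≤ ‖g t‖ * (2 ^ α * (|t - c| ^ α * Ig + Cg)) :=
          mul_le_mul_of_nonneg_left (hGbound t) (norm_nonneg _)
      _ = (2 ^ α * Ig) * (|t - c| ^ α * ‖g t‖) + (2 ^ α * Cg) * ‖g t‖ := by ring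
  have hbound_int : Integrable fun t : ℝ =>
      (2 ^ α * Ig) * (|t - c| ^ α * ‖g t‖) + (2 ^ α * Cg) * ‖g t‖ :=
    (hmomg_int.const_mul _).add (hInorm.const_mul _)
  have hprod_int : Integrable fun t : ℝ =>
      (starRingEnd ℂ) (g t) * ∫ s, ((|(|t| - |s|)| ^ α : ℝ) : ℂ) * g s := by
    refine Integrable.mono' hbound_int ?_ ?_
    · exact (hconj_meas.mul hG_meas.measurable).aestronglyMeasurable
    · filter_upwards with t using hptb t
  -- the outer integral identity
  have hzero : (∫ t, (starRingEnd ℂ) (g t)) = 0 := by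
    rw [integral_conj, hg0, map_zero]
  have hsplit : ∀ t : ℝ, (starRingEnd ℂ) (g t) * ((1 / 2 : ℂ) *
        ((∫ s, ((|s| ^ α : ℝ) : ℂ) * g s) - ∫ s, ((|(|t| - |s|)| ^ α : ℝ) : ℂ) * g s))
      = ((1 / 2 : ℂ) * (∫ s, ((|s| ^ α : ℝ) : ℂ) * g s)) * (starRingEnd ℂ) (g t)
        - (1 / 2 : ℂ) * ((starRingEnd ℂ) (g t) * ∫ s, ((|(|t| - |s|)| ^ α : ℝ) : ℂ) * g s) := by
    intro t
    ring
  have hA : Integrable fun t : ℝ =>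
      ((1 / 2 : ℂ) * (∫ s, ((|s| ^ α : ℝ) : ℂ) * g s)) * (starRingEnd ℂ) (g t) :=
    hconj_int.const_mul _
  have hB : Integrable fun t : ℝ =>
      (1 / 2 : ℂ) * ((starRingEnd ℂ) (g t) * ∫ s, ((|(|t| - |s|)| ^ α : ℝ) : ℂ) * g s) :=
    hprod_int.const_mul _
  have houter : (∫ t, ∫ s, ((R t s : ℝ) : ℂ) * (starRingEnd ℂ) (g t) * g s)
      = -((1 / 2 : ℂ) * ∫ t, (starRingEnd ℂ) (g t) *
          ∫ s, ((|(|t| - |s|)| ^ α : ℝ) : ℂ) * g s) := by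
    rw [integral_congr_ae (Filter.Eventually.of_forall hinner),
      integral_congr_ae (Filter.Eventually.of_forall hsplit),
      integral_sub hA hB, integral_const_mul, integral_const_mul, hzero, mul_zero, zero_sub]
  -- final numeric computation
  have hN0 : 0 ≤ N := hN ▸ integral_nonneg fun u => norm_nonneg _
  have hcψ0 : 0 ≤ cψ := hcψ ▸ integral_nonneg fun u =>
    mul_nonneg (Real.rpow_nonneg (abs_nonneg _) _) (norm_nonneg _)
  have h2α : (0:ℝ) ≤ 2 ^ α := Real.rpow_nonneg (by norm_num) _
  have hD : (0:ℝ) < (2:ℝ) ^ ((j:ℝ) * (1 + α)) := Real.rpow_pos_of_pos h2 _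
  have hc0c0 : c0 * c0 = a := by
    rw [hc0_def, ha_def, ← Real.rpow_add h2, ← Real.rpow_natCast 2 j]
    norm_num
  have hainv : a⁻¹ = (2:ℝ) ^ (-(j:ℝ)) := by
    rw [Real.rpow_neg h2.le, ha_def, Real.rpow_natCast]
  have hkey : a⁻¹ * (a⁻¹ ^ α) = ((2:ℝ) ^ ((j:ℝ) * (1 + α)))⁻¹ := by
    rw [hainv, ← Real.rpow_mul h2.le, ← Real.rpow_add h2,
      show -(j:ℝ) + -(j:ℝ) * α = -((j:ℝ) * (1 + α)) by ring, Real.rpow_neg h2.le]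
  have hpow : Ig * Cg = cψ * N / (2:ℝ) ^ ((j:ℝ) * (1 + α)) := by
    rw [hIg_val, hCg_val]
    calc c0 * (a⁻¹ * N) * (a⁻¹ ^ α * c0 * (a⁻¹ * cψ))
        = (c0 * c0 * a⁻¹) * (a⁻¹ * a⁻¹ ^ α) * (N * cψ) := by ring
      _ = 1 * ((2:ℝ) ^ ((j:ℝ) * (1 + α)))⁻¹ * (N * cψ) := by
          rw [hkey, hc0c0, mul_inv_cancel₀ ha.ne']
      _ = cψ * N / (2:ℝ) ^ ((j:ℝ) * (1 + α)) := by
          rw [one_mul, div_eq_mul_inv]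
          ring
  have hq1 : 1 ≤ qα := by
    rw [hqα]
    split_ifs with h
    · norm_num
    · exact Real.one_le_rpow one_le_two (by linarith)
  have hfinal : 2 ^ α * (Ig * Cg) ≤ qα * cψ * 2 ^ α * N / (2:ℝ) ^ ((j:ℝ) * (1 + α)) := by
    rw [hpow]
    have hDinv : (0:ℝ) ≤ ((2:ℝ) ^ ((j:ℝ) * (1 + α)))⁻¹ := (inv_pos.2 hD).le
    have hP : (0:ℝ) ≤ cψ * 2 ^ α * N * ((2:ℝ) ^ ((j:ℝ) * (1 + α)))⁻¹ :=
      mul_nonneg (mul_nonneg (mul_nonneg hcψ0 h2α) hN0) hDinv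
    calc 2 ^ α * (cψ * N / (2:ℝ) ^ ((j:ℝ) * (1 + α)))
        = 1 * (cψ * 2 ^ α * N * ((2:ℝ) ^ ((j:ℝ) * (1 + α)))⁻¹) := by
          rw [div_eq_mul_inv]; ring
      _ ≤ qα * (cψ * 2 ^ α * N * ((2:ℝ) ^ ((j:ℝ) * (1 + α)))⁻¹) :=
          mul_le_mul_of_nonneg_right hq1 hP
      _ = qα * cψ * 2 ^ α * N / (2:ℝ) ^ ((j:ℝ) * (1 + α)) := by
          rw [div_eq_mul_inv]; ring
  -- put everything together
  calc ‖∫ t, ∫ s, ((R t s : ℝ) : ℂ) * (starRingEnd ℂ) (g t) * g s‖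
      = (1 / 2) * ‖∫ t, (starRingEnd ℂ) (g t) *
          ∫ s, ((|(|t| - |s|)| ^ α : ℝ) : ℂ) * g s‖ := by
        rw [houter, norm_neg, norm_mul]
        norm_num
    _ ≤ (1 / 2) * ∫ t, ((2 ^ α * Ig) * (|t - c| ^ α * ‖g t‖) + (2 ^ α * Cg) * ‖g t‖) := by
        apply mul_le_mul_of_nonneg_left _ (by norm_num : (0:ℝ) ≤ 1 / 2)
        refine le_trans (norm_integral_le_integral_norm _) ?_
        apply integral_mono_of_nonneg
        · filter_upwards with t using norm_nonneg _
        · exact hbound_int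
        · filter_upwards with t using hptb t
    _ = 2 ^ α * (Ig * Cg) := by
        rw [integral_add (hmomg_int.const_mul _) (hInorm.const_mul _),
          integral_const_mul, integral_const_mul, ← hIg_def, ← hCg_def]
        ring
    _ ≤ qα * cψ * 2 ^ α * N / (2:ℝ) ^ ((j:ℝ) * (1 + α)) := hfinal
end

section
/- Let α > 0 and T > 0. Let g : ℝ → ℂ be twice continuously differentiable with g(z) → 0 and g'(z) → 0 as z → ±∞, and suppose the integrals ∫_ℝ |g'(z)| dz and ∫_ℝ (ln(e^α + |z|/2))^α |g^{(i)}(z)| dz for i = 0, 1, 2 are all finite. Define φ(t) = (1/2π) ∫_ℝ e^{itz} g(z) dz and φ_{0k}(t) = φ(t − k) for k ∈ ℤ. Then there exists a constant B > 0 (depending only on g, α, T) such that for every integer k ≠ 0 and all t, s ∈ [0,T] with t ≠ s, |φ_{0k}(t) − φ_{0k}(s)| ≤ B / (k² · (ln(e^α + 1/|t − s|))^α). -/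
/-!
Write `φ = F g / 2π` with `F f u = ∫ e^{iuz} f(z) dz`, and let `ℓ(r) = log^α (e^α + r)`.
Since `|e^{iuz} - e^{ivz}| ≤ min 2 (|u - v| |z|)` and `min 1 (x / y) ℓ(y) ≤ ℓ(x)`, the transform
of any `f` with `∫ ℓ(|z|/2) |f| < ∞` has modulus of continuity `≲ 1 / ℓ(1 / |u - v|)`, which is
the claim for `|k| ≤ T + 1`. For larger `|k|`, integrating by parts twice gives
`F g u = -F g'' u / u²` with `|u|, |v| ≥ |k| - T`, so the modulus of `F g''` and the Lipschitz
bound for `u ↦ u⁻²` both gain a factor `k⁻²`; the Lipschitz term is absorbed because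
`h ℓ(1/h) ≤ (1 + h) ℓ(1)`.
-/

open MeasureTheory Filter

noncomputable def logWeight (α r : ℝ) : ℝ := Real.log (Real.exp α + r) ^ α

lemma le_log_exp_add_s17 (α : ℝ) {r : ℝ} (hr : 0 ≤ r) : α ≤ Real.log (Real.exp α + r) := by
  simpa using Real.log_le_log (Real.exp_pos α) (le_add_of_nonneg_right hr)

section LogWeight

variable {α : ℝ}

lemma logWeight_pos (hα : 0 < α) {r : ℝ} (hr : 0 ≤ r) : 0 < logWeight α r :=
  Real.rpow_pos_of_pos (hα.trans_le (le_log_exp_add_s17 α hr)) α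

lemma rpow_self_le_logWeight (hα : 0 < α) {r : ℝ} (hr : 0 ≤ r) : α ^ α ≤ logWeight α r :=
  Real.rpow_le_rpow hα.le (le_log_exp_add_s17 α hr) hα.le

lemma logWeight_le_logWeight (hα : 0 < α) {x y : ℝ} (hx : 0 ≤ x) (hxy : x ≤ y) :
    logWeight α x ≤ logWeight α y :=
  Real.rpow_le_rpow (hα.le.trans (le_log_exp_add_s17 α hx))
    (Real.log_le_log (by positivity) (by linarith)) hα.le

lemma mul_logWeight_le_mul_logWeight (hα : 0 < α) {x y : ℝ} (hx : 0 ≤ x) (hxy : x ≤ y) :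
    x * logWeight α y ≤ y * logWeight α x := by
  obtain rfl | hx := hx.eq_or_lt
  · simpa using mul_nonneg hxy (logWeight_pos hα le_rfl).le
  have hy : 0 < y := hx.trans_le hxy
  set a := Real.log (Real.exp α + x)
  set b := Real.log (Real.exp α + y)
  have ha : α ≤ a := le_log_exp_add_s17 α hx.le
  have ha0 : 0 < a := hα.trans_le ha
  have hab : a ≤ b := Real.log_le_log (by positivity) (by linarith)
  have hba : b - a ≤ Real.log (y / x) := by
    rw [← Real.log_div (by positivity) (by positivity)]
    refine Real.log_le_log (by positivity) ?_
    rw [div_le_div_iff₀ (by positivity) hx]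
    nlinarith [Real.exp_pos α]
  -- `b / a ≤ 1 + (b - a) / α ≤ (y / x) ^ (1 / α)`, using `α ≤ a` and `b - a ≤ log (y / x)`.
  have hratio : b / a ≤ Real.exp (Real.log (y / x) / α) := calc
    b / a = 1 + (b - a) / a := by field_simp; ring
    _ ≤ 1 + (b - a) / α := by gcongr
    _ ≤ 1 + Real.log (y / x) / α := by gcongr
    _ ≤ Real.exp (Real.log (y / x) / α) := by
      linarith [Real.add_one_le_exp (Real.log (y / x) / α)]
  have hpow : b ^ α / a ^ α ≤ y / x := by
    rw [← Real.div_rpow (ha0.trans_le hab).le ha0.le]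
    calc (b / a) ^ α ≤ Real.exp (Real.log (y / x) / α) ^ α := by
          gcongr; exact div_nonneg (ha0.trans_le hab).le ha0.le
      _ = y / x := by
        rw [← Real.exp_mul, div_mul_cancel₀ _ hα.ne', Real.exp_log (by positivity)]
  rw [div_le_div_iff₀ (Real.rpow_pos_of_pos ha0 α) hx] at hpow
  simpa [logWeight, mul_comm] using hpow

lemma min_one_div_mul_logWeight_le (hα : 0 < α) {x y : ℝ} (hx : 0 ≤ x) (hy : 0 < y) :
    min 1 (x / y) * logWeight α y ≤ logWeight α x := by
  have hℓ := (logWeight_pos hα hy.le).le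
  rcases le_total y x with hyx | hxy
  · calc min 1 (x / y) * logWeight α y ≤ 1 * logWeight α y := by gcongr; exact min_le_left _ _
      _ ≤ logWeight α x := by rw [one_mul]; exact logWeight_le_logWeight hα hy.le hyx
  · calc min 1 (x / y) * logWeight α y ≤ x / y * logWeight α y := by
          gcongr; exact min_le_right _ _
      _ ≤ logWeight α x := by
          rw [div_mul_eq_mul_div, div_le_iff₀ hy, mul_comm (logWeight α x)]
          exact mul_logWeight_le_mul_logWeight hα hx hxy

lemma mul_logWeight_one_div_le (hα : 0 < α) {h : ℝ} (hh : 0 < h) :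
    h * logWeight α (1 / h) ≤ (1 + h) * logWeight α 1 := by
  have key := min_one_div_mul_logWeight_le hα zero_le_one (one_div_pos.2 hh)
  rw [one_div_one_div] at key
  have hmin : h ≤ (1 + h) * min 1 h := by
    rcases le_total 1 h with h1 | h1
    · rw [min_eq_left h1]; linarith
    · rw [min_eq_right h1]; nlinarith
  calc h * logWeight α (1 / h) ≤ (1 + h) * min 1 h * logWeight α (1 / h) := by
        gcongr; exact (logWeight_pos hα (by positivity)).le
    _ ≤ (1 + h) * logWeight α 1 := by rw [mul_assoc]; gcongr

lemma integrable_of_integrable_logWeight_mul {E : Type*} [NormedAddCommGroup E] (hα : 0 < α)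
    {f : ℝ → E} (hf : AEStronglyMeasurable f)
    (hw : Integrable fun z => logWeight α (|z| / 2) * ‖f z‖) : Integrable f :=
  hw.const_mul (α ^ α)⁻¹ |>.mono' hf <| Eventually.of_forall fun z => by
    rw [inv_mul_eq_div, le_div_iff₀ (by positivity), mul_comm]
    exact mul_le_mul_of_nonneg_right (rpow_self_le_logWeight hα (by positivity)) (norm_nonneg _)

end LogWeight

noncomputable def fourierExp (f : ℝ → ℂ) (u : ℝ) : ℂ :=
  ∫ z : ℝ, Complex.exp (Complex.I * u * z) * f z

section FourierExp

variable {f : ℝ → ℂ}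

lemma fourierExp_eq_fourier (f : ℝ → ℂ) (u : ℝ) :
    fourierExp f u = FourierTransform.fourier f (-u / (2 * Real.pi)) := by
  rw [Real.fourier_real_eq_integral_exp_smul, fourierExp]
  congr with z
  have hπ : (Real.pi : ℂ) ≠ 0 := by exact_mod_cast Real.pi_ne_zero
  rw [smul_eq_mul]
  push_cast
  field_simp

lemma fourierExp_deriv (hf : Integrable f) (hd : Differentiable ℝ f) (hf' : Integrable (deriv f))
    (u : ℝ) : fourierExp (deriv f) u = -Complex.I * u * fourierExp f u := by
  rw [fourierExp_eq_fourier, fourierExp_eq_fourier, Real.fourier_deriv hf hd hf']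
  simp only [smul_eq_mul]
  have hπ : (Real.pi : ℂ) ≠ 0 := by exact_mod_cast Real.pi_ne_zero
  push_cast
  field_simp

lemma fourierExp_iteratedDeriv {n : ℕ} (hf : ContDiff ℝ n f)
    (hint : ∀ i ≤ n, Integrable (iteratedDeriv i f)) (u : ℝ) :
    fourierExp (iteratedDeriv n f) u = (-Complex.I * u) ^ n * fourierExp f u := by
  induction n with
  | zero => simp
  | succ n ih =>
    rw [iteratedDeriv_succ, fourierExp_deriv (hint n n.le_succ)
      (hf.differentiable_iteratedDeriv n (by exact_mod_cast n.lt_succ_self))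
      (iteratedDeriv_succ (f := f) ▸ hint (n + 1) le_rfl),
      ih (hf.of_le (by exact_mod_cast n.le_succ)) fun i hi => hint i (hi.trans n.le_succ)]
    ring

lemma norm_exp_I_mul_mul_s17 (u z : ℝ) : ‖Complex.exp (Complex.I * u * z)‖ = 1 := by
  simpa [mul_assoc] using Complex.norm_exp_I_mul_ofReal (u * z)

lemma norm_fourierExp_le (f : ℝ → ℂ) (u : ℝ) : ‖fourierExp f u‖ ≤ ∫ z, ‖f z‖ := by
  refine (norm_integral_le_integral_norm _).trans_eq ?_
  congr with z
  rw [norm_mul, norm_exp_I_mul_mul_s17, one_mul]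

lemma norm_exp_sub_exp_le (u v z : ℝ) :
    ‖Complex.exp (Complex.I * u * z) - Complex.exp (Complex.I * v * z)‖ ≤
      min 2 (|u - v| * |z|) := by
  have hfac : Complex.exp (Complex.I * u * z) - Complex.exp (Complex.I * v * z) =
      Complex.exp (Complex.I * v * z) * (Complex.exp (Complex.I * ((u - v) * z : ℝ)) - 1) := by
    rw [mul_sub, ← Complex.exp_add]
    push_cast
    ring_nf
  rw [hfac, norm_mul, norm_exp_I_mul_mul_s17, one_mul]
  refine le_min ((norm_sub_le _ _).trans ?_) ?_
  · rw [Complex.norm_exp_I_mul_ofReal, norm_one]; norm_num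
  · simpa [abs_mul] using Real.norm_exp_I_mul_ofReal_sub_one_le (x := (u - v) * z)

lemma integrable_exp_mul (hf : Integrable f) (u : ℝ) :
    Integrable fun z : ℝ => Complex.exp (Complex.I * u * z) * f z :=
  hf.bdd_mul (c := 1) (by fun_prop) (Eventually.of_forall fun z => (norm_exp_I_mul_mul_s17 u z).le)

lemma norm_fourierExp_sub_le {α : ℝ} (hα : 0 < α) (hf : Integrable f)
    (hw : Integrable fun z => logWeight α (|z| / 2) * ‖f z‖) {u v : ℝ} (huv : u ≠ v) :
    ‖fourierExp f u - fourierExp f v‖ ≤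
      2 * (∫ z, logWeight α (|z| / 2) * ‖f z‖) / logWeight α (1 / |u - v|) := by
  have hh : 0 < |u - v| := abs_pos.2 (sub_ne_zero.2 huv)
  have hL := logWeight_pos hα (one_div_pos.2 hh).le
  have hexp (z : ℝ) : ‖Complex.exp (Complex.I * u * z) - Complex.exp (Complex.I * v * z)‖ ≤
      2 / logWeight α (1 / |u - v|) * logWeight α (|z| / 2) := by
    have key := min_one_div_mul_logWeight_le hα (x := |z| / 2) (by positivity) (one_div_pos.2 hh)
    rw [div_div_eq_mul_div, div_one, ← le_div_iff₀ hL] at key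
    calc _ ≤ min 2 (|u - v| * |z|) := norm_exp_sub_exp_le u v z
      _ = 2 * min 1 (|z| / 2 * |u - v|) := by
        rw [mul_min_of_nonneg _ _ zero_le_two]; ring_nf
      _ ≤ _ := (mul_le_mul_of_nonneg_left key zero_le_two).trans_eq (by ring)
  rw [fourierExp, fourierExp, ← integral_sub (integrable_exp_mul hf u) (integrable_exp_mul hf v),
    mul_div_right_comm, ← integral_const_mul]
  refine norm_integral_le_of_norm_le (hw.const_mul _) (Eventually.of_forall fun z => ?_)
  rw [← sub_mul, norm_mul, ← mul_assoc]
  exact mul_le_mul_of_nonneg_right (hexp z) (norm_nonneg _)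

end FourierExp

lemma abs_one_div_sq_sub_one_div_sq_le {m u v : ℝ} (hm : 0 < m) (hu : m ≤ |u|) (hv : m ≤ |v|) :
    |1 / u ^ 2 - 1 / v ^ 2| ≤ 2 * |u - v| / m ^ 3 := by
  have ha : 0 < |u| := hm.trans_le hu
  have hb : 0 < |v| := hm.trans_le hv
  have hsplit : 1 / u ^ 2 - 1 / v ^ 2 =
      (|v| - |u|) * (1 / (|u| * |v| ^ 2) + 1 / (|u| ^ 2 * |v|)) := by
    rw [← sq_abs u, ← sq_abs v]; field_simp; ring
  have h₁ : 1 / (|u| * |v| ^ 2) ≤ 1 / m ^ 3 := by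
    rw [show m ^ 3 = m * m ^ 2 by ring]; gcongr
  have h₂ : 1 / (|u| ^ 2 * |v|) ≤ 1 / m ^ 3 := by
    rw [show m ^ 3 = m ^ 2 * m by ring]; gcongr
  calc |1 / u ^ 2 - 1 / v ^ 2|
      = |(|v| - |u|)| * (1 / (|u| * |v| ^ 2) + 1 / (|u| ^ 2 * |v|)) := by
        rw [hsplit, abs_mul, abs_of_nonneg (a := _ + _) (by positivity)]
    _ ≤ |u - v| * (1 / m ^ 3 + 1 / m ^ 3) := by
        refine mul_le_mul ?_ (add_le_add h₁ h₂) (by positivity) (abs_nonneg _)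
        rw [abs_sub_comm]; exact abs_abs_sub_abs_le_abs_sub u v
    _ = 2 * |u - v| / m ^ 3 := by ring

section Translate

variable {Φ Ψ : ℝ → ℂ}

lemma norm_sub_le_of_eq_neg_sq_mul (hΦΨ : ∀ u : ℝ, Ψ u = -(u : ℂ) ^ 2 * Φ u) {u v : ℝ}
    (hu : u ≠ 0) (hv : v ≠ 0) :
    ‖Φ u - Φ v‖ ≤ ‖Ψ u - Ψ v‖ / u ^ 2 + ‖Ψ v‖ * |1 / u ^ 2 - 1 / v ^ 2| := by
  have hu' : (u : ℂ) ≠ 0 := by exact_mod_cast hu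
  have hv' : (v : ℂ) ≠ 0 := by exact_mod_cast hv
  have hsplit : Φ u - Φ v =
      -((Ψ u - Ψ v) / (u : ℂ) ^ 2 + Ψ v * ((1 / u ^ 2 - 1 / v ^ 2 : ℝ) : ℂ)) := by
    rw [hΦΨ, hΦΨ]; push_cast; field_simp; ring
  rw [hsplit, norm_neg]
  refine (norm_add_le _ _).trans_eq ?_
  rw [norm_div, norm_mul, norm_pow, Complex.norm_real, Complex.norm_real, Real.norm_eq_abs,
    Real.norm_eq_abs, sq_abs]

lemma norm_sub_le_of_le_abs (hΦΨ : ∀ u : ℝ, Ψ u = -(u : ℂ) ^ 2 * Φ u) {a M m u v : ℝ}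
    (hΨuv : ‖Ψ u - Ψ v‖ ≤ a) (hΨv : ‖Ψ v‖ ≤ M) (hm : 1 ≤ m) (hu : m ≤ |u|) (hv : m ≤ |v|) :
    ‖Φ u - Φ v‖ ≤ (a + 2 * M * |u - v|) / m ^ 2 := by
  have hm0 : 0 < m := one_pos.trans_le hm
  have hu2 : m ^ 2 ≤ u ^ 2 := by rw [← sq_abs u]; gcongr
  have hm23 : m ^ 2 ≤ m ^ 3 := pow_le_pow_right₀ hm (by norm_num)
  calc ‖Φ u - Φ v‖ ≤ ‖Ψ u - Ψ v‖ / u ^ 2 + ‖Ψ v‖ * |1 / u ^ 2 - 1 / v ^ 2| :=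
        norm_sub_le_of_eq_neg_sq_mul hΦΨ (abs_pos.1 (hm0.trans_le hu))
          (abs_pos.1 (hm0.trans_le hv))
    _ ≤ a / m ^ 2 + M * (2 * |u - v| / m ^ 2) := by
        gcongr
        · exact (norm_nonneg _).trans hΨuv
        · exact (norm_nonneg _).trans hΨv
        · exact (abs_one_div_sq_sub_one_div_sq_le hm0 hu hv).trans
            (div_le_div_of_nonneg_left (by positivity) (by positivity) hm23)
    _ = (a + 2 * M * |u - v|) / m ^ 2 := by ring

lemma nonneg_of_norm_sub_le {α A : ℝ} (hα : 0 < α)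
    (hΦ : ∀ u v, u ≠ v → ‖Φ u - Φ v‖ ≤ A / logWeight α (1 / |u - v|)) : 0 ≤ A := by
  have := (norm_nonneg _).trans (hΦ 0 1 zero_ne_one)
  rwa [le_div_iff₀ (logWeight_pos hα (by positivity)), zero_mul] at this

theorem norm_translate_sub_le {α A₀ A₂ M T : ℝ} (hα : 0 < α)
    (hΦ : ∀ u v, u ≠ v → ‖Φ u - Φ v‖ ≤ A₀ / logWeight α (1 / |u - v|))
    (hΨ : ∀ u v, u ≠ v → ‖Ψ u - Ψ v‖ ≤ A₂ / logWeight α (1 / |u - v|))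
    (hM : ∀ u, ‖Ψ u‖ ≤ M) (hΦΨ : ∀ u : ℝ, Ψ u = -(u : ℂ) ^ 2 * Φ u)
    {k : ℤ} (hk : k ≠ 0) {t s : ℝ} (ht : t ∈ Set.Icc 0 T) (hs : s ∈ Set.Icc 0 T) (hts : t ≠ s) :
    ‖Φ (t - k) - Φ (s - k)‖ ≤ (T + 1) ^ 2 * (A₀ + A₂ + 2 * M * (1 + T) * logWeight α 1) /
      (k ^ 2 * logWeight α (1 / |t - s|)) := by
  set X := A₀ + A₂ + 2 * M * (1 + T) * logWeight α 1
  set L := logWeight α (1 / |t - s|)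
  have hh : 0 < |t - s| := abs_pos.2 (sub_ne_zero.2 hts)
  have hL : 0 < L := logWeight_pos hα (one_div_pos.2 hh).le
  have hk2 : 0 < (k : ℝ) ^ 2 := by positivity
  have hT : 0 ≤ T := ht.1.trans ht.2
  have hℓ1 : 0 ≤ logWeight α 1 := (logWeight_pos hα zero_le_one).le
  have hM0 : 0 ≤ M := (norm_nonneg _).trans (hM 0)
  have hA₀ := nonneg_of_norm_sub_le hα hΦ
  have hA₂ := nonneg_of_norm_sub_le hα hΨ
  have hne : t - k ≠ s - k := by simpa using hts
  have hdiff : t - k - (s - k) = t - s := by ring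
  have hhL : |t - s| * L ≤ (1 + T) * logWeight α 1 :=
    (mul_logWeight_one_div_le hα hh).trans <| by
      gcongr; exact abs_sub_le_iff.2 ⟨by linarith [ht.2, hs.1], by linarith [ht.1, hs.2]⟩
  have hXL : 0 ≤ X / L := by positivity
  rw [← div_mul_div_comm]
  rcases le_or_gt |(k : ℝ)| (T + 1) with hsmall | hlarge
  · have h1 : 1 ≤ (T + 1) ^ 2 / k ^ 2 := by
      rw [one_le_div hk2, ← sq_abs]; gcongr
    calc ‖Φ (t - k) - Φ (s - k)‖ ≤ A₀ / L := by simpa only [hdiff] using hΦ _ _ hne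
      _ ≤ X / L := by
          gcongr
          linarith [show 0 ≤ 2 * M * (1 + T) * logWeight α 1 by positivity]
      _ ≤ (T + 1) ^ 2 / k ^ 2 * (X / L) := le_mul_of_one_le_left hXL h1
  · have hm : 1 ≤ |(k : ℝ)| - T := by linarith
    have hmk : 1 / (|(k : ℝ)| - T) ^ 2 ≤ (T + 1) ^ 2 / k ^ 2 := by
      rw [div_le_div_iff₀ (by positivity) hk2, one_mul, ← sq_abs (k : ℝ), ← mul_pow]
      gcongr
      nlinarith
    have hshift {r : ℝ} (hr : r ∈ Set.Icc 0 T) : |(k : ℝ)| - T ≤ |r - k| := by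
      rw [abs_sub_comm]
      linarith [abs_sub_abs_le_abs_sub (k : ℝ) r, abs_of_nonneg hr.1, hr.2]
    calc ‖Φ (t - k) - Φ (s - k)‖ ≤ (A₂ / L + 2 * M * |t - s|) / (|(k : ℝ)| - T) ^ 2 := by
          simpa only [hdiff] using norm_sub_le_of_le_abs hΦΨ (hΨ _ _ hne) (hM _) hm
            (hshift ht) (hshift hs)
      _ ≤ (X / L) / (|(k : ℝ)| - T) ^ 2 := by
          gcongr
          rw [le_div_iff₀ hL, add_mul, div_mul_cancel₀ _ hL.ne']
          nlinarith [mul_le_mul_of_nonneg_left hhL hM0]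
      _ = 1 / (|(k : ℝ)| - T) ^ 2 * (X / L) := by ring
      _ ≤ (T + 1) ^ 2 / k ^ 2 * (X / L) := by gcongr

end Translate

theorem translate_modulus_quadratic_decay_general
    (α T : ℝ) (hα : 0 < α)
    (g : ℝ → ℂ) (hg : ContDiff ℝ 2 g)
    (hlog : ∀ i : ℕ, i ≤ 2 →
      Integrable (fun z : ℝ =>
        Real.log (Real.exp α + |z| / 2) ^ α * ‖iteratedDeriv i g z‖))
    (φ : ℝ → ℂ)
    (hφ : ∀ t : ℝ, φ t =
      (1 / (2 * (Real.pi : ℂ))) * ∫ z : ℝ, Complex.exp (Complex.I * t * z) * g z) :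
    ∃ B > (0 : ℝ), ∀ k : ℤ, k ≠ 0 →
      ∀ t ∈ Set.Icc (0 : ℝ) T, ∀ s ∈ Set.Icc (0 : ℝ) T, t ≠ s →
        ‖φ (t - (k : ℝ)) - φ (s - (k : ℝ))‖ ≤
          B / ((k : ℝ) ^ 2 * Real.log (Real.exp α + 1 / |t - s|) ^ α) := by
  have hint (i : ℕ) (hi : i ≤ 2) : Integrable (iteratedDeriv i g) :=
    integrable_of_integrable_logWeight_mul hα
      (hg.continuous_iteratedDeriv i (by exact_mod_cast hi)).aestronglyMeasurable (hlog i hi)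
  have hΨ (u : ℝ) : fourierExp (iteratedDeriv 2 g) u = -(u : ℂ) ^ 2 * fourierExp g u := by
    rw [fourierExp_iteratedDeriv (by exact_mod_cast hg) hint, mul_pow, neg_pow, Complex.I_sq]
    ring
  have hc : ‖1 / (2 * (Real.pi : ℂ))‖ ≤ 1 := by
    rw [norm_div, norm_one, norm_mul, Complex.norm_two, Complex.norm_real,
      Real.norm_of_nonneg Real.pi_pos.le]
    exact (div_le_one (by positivity)).2 (by linarith [Real.pi_gt_three])
  set C := (T + 1) ^ 2 * (2 * (∫ z, logWeight α (|z| / 2) * ‖g z‖) +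
    2 * (∫ z, logWeight α (|z| / 2) * ‖iteratedDeriv 2 g z‖) +
    2 * (∫ z, ‖iteratedDeriv 2 g z‖) * (1 + T) * logWeight α 1)
  refine ⟨max C 1, lt_max_of_lt_right one_pos, fun k hk t ht s hs hts => ?_⟩
  have hL := logWeight_pos hα (one_div_pos.2 (abs_pos.2 (sub_ne_zero.2 hts))).le
  rw [hφ, hφ, ← mul_sub, norm_mul]
  calc _ ≤ ‖fourierExp g (t - k) - fourierExp g (s - k)‖ :=
        mul_le_of_le_one_left (norm_nonneg _) hc
    _ ≤ C / (k ^ 2 * logWeight α (1 / |t - s|)) :=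
      norm_translate_sub_le hα
        (fun _ _ => norm_fourierExp_sub_le hα (hint 0 (by norm_num)) (hlog 0 (by norm_num)))
        (fun _ _ => norm_fourierExp_sub_le hα (hint 2 le_rfl) (hlog 2 le_rfl))
        (norm_fourierExp_le _) hΨ hk ht hs hts
    _ ≤ max C 1 / (k ^ 2 * logWeight α (1 / |t - s|)) := by gcongr; exact le_max_left _ _

/-- Key step of Lemma 6.2: for `φ(t) = (1/2π)∫ e^{itz} g(z) dz` with `g` twice
continuously differentiable, vanishing together with `g'` at `±∞`, and having
logarithmically weighted integrable derivatives up to order two, the translates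
`φ_{0k}(t) = φ(t−k)` satisfy, for `k ≠ 0` and `t,s ∈ [0,T]`, `t ≠ s`,
`|φ_{0k}(t) − φ_{0k}(s)| ≤ B/(k² ln^α(e^α + 1/|t−s|))`. -/
theorem translate_modulus_quadratic_decay
    (α T : ℝ) (hα : 0 < α) (hT : 0 < T)
    (g : ℝ → ℂ) (hg : ContDiff ℝ 2 g)
    (hgtop : Tendsto g atTop (nhds 0)) (hgbot : Tendsto g atBot (nhds 0))
    (hg'top : Tendsto (deriv g) atTop (nhds 0))
    (hg'bot : Tendsto (deriv g) atBot (nhds 0))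
    (hg'int : Integrable (deriv g))
    (hlog : ∀ i : ℕ, i ≤ 2 →
      Integrable (fun z : ℝ =>
        Real.log (Real.exp α + |z| / 2) ^ α * ‖iteratedDeriv i g z‖))
    (φ : ℝ → ℂ)
    (hφ : ∀ t : ℝ, φ t =
      (1 / (2 * (Real.pi : ℂ))) * ∫ z : ℝ, Complex.exp (Complex.I * t * z) * g z) :
    ∃ B > (0 : ℝ), ∀ k : ℤ, k ≠ 0 →
      ∀ t ∈ Set.Icc (0 : ℝ) T, ∀ s ∈ Set.Icc (0 : ℝ) T, t ≠ s →
        ‖φ (t - (k : ℝ)) - φ (s - (k : ℝ))‖ ≤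
          B / ((k : ℝ) ^ 2 * Real.log (Real.exp α + 1 / |t - s|) ^ α) :=
  translate_modulus_quadratic_decay_general α T hα g hg hlog φ hφ
end

section
/- Let C > 0, β > 1/2, and α > 0, and define σ(h) = C (ln(e^α + 1/h))^{−β} for h > 0. Then σ is strictly increasing on (0,∞) with σ(h) → 0 as h → 0+, its inverse on the range of σ is given by σ^{(−1)}(u) = 1/(exp((C/u)^{1/β}) − e^α), and there exists ε > 0 such that ∫_0^ε √(−ln(σ^{(−1)}(u))) du < ∞. -/
/-!
Once `(C/u)^(1/β) > α` (true for small `u`) we have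
`-ln σ⁻¹(u) = ln (exp ((C/u)^(1/β)) - e^α) ≤ (C/u)^(1/β)`, so the integrand is at most
`(C/u)^(1/(2β))`, which is integrable at `0` exactly because `β > 1/2`.
-/

open Filter Real Set MeasureTheory Topology

noncomputable def logModulus (C β α h : ℝ) : ℝ := C * log (exp α + 1 / h) ^ (-β)

noncomputable def logModulusInv (C β α u : ℝ) : ℝ := 1 / (exp ((C / u) ^ (1 / β)) - exp α)

section LogModulus

variable {C β α : ℝ}

lemma log_exp_add_one_div_pos {h : ℝ} (hα : 0 ≤ α) (hh : 0 < h) :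
    0 < log (exp α + 1 / h) := by
  have : 0 < 1 / h := one_div_pos.2 hh
  exact log_pos (by linarith [one_le_exp hα])

lemma logModulus_strictMonoOn (hC : 0 < C) (hβ : 0 < β) (hα : 0 ≤ α) :
    StrictMonoOn (logModulus C β α) (Ioi 0) := by
  intro h₁ (hh₁ : 0 < h₁) h₂ (hh₂ : 0 < h₂) hlt
  have hlog : log (exp α + 1 / h₂) < log (exp α + 1 / h₁) := by
    have : 0 < 1 / h₂ := one_div_pos.2 hh₂
    exact log_lt_log (by positivity) (by linarith [one_div_lt_one_div_of_lt hh₁ hlt])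
  exact mul_lt_mul_of_pos_left
    (rpow_lt_rpow_of_neg (log_exp_add_one_div_pos hα hh₂) hlog (neg_neg_of_pos hβ)) hC

lemma tendsto_logModulus_nhdsGT_zero (hβ : 0 < β) :
    Tendsto (logModulus C β α) (𝓝[>] 0) (𝓝 0) := by
  have harg : Tendsto (fun h : ℝ => exp α + 1 / h) (𝓝[>] 0) atTop :=
    tendsto_atTop_add_const_left _ _ (tendsto_inv_nhdsGT_zero.congr fun h => (one_div h).symm)
  have := ((tendsto_rpow_neg_atTop hβ).comp (tendsto_log_atTop.comp harg)).const_mul C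
  rwa [mul_zero] at this

lemma logModulusInv_logModulus {h : ℝ} (hC : C ≠ 0) (hβ : β ≠ 0) (hα : 0 ≤ α) (hh : 0 < h) :
    logModulusInv C β α (logModulus C β α h) = h := by
  have hL := log_exp_add_one_div_pos hα hh
  have hCL : C / logModulus C β α h = log (exp α + 1 / h) ^ β := by
    rw [logModulus, div_mul_cancel_left₀ hC, rpow_neg hL.le, inv_inv]
  rw [logModulusInv, hCL, ← rpow_mul hL.le, mul_one_div_cancel hβ, rpow_one,
    exp_log (by positivity), add_sub_cancel_left, one_div_one_div]

lemma log_exp_sub_exp_le {a b : ℝ} (h : b < a) : log (exp a - exp b) ≤ a := by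
  calc log (exp a - exp b) ≤ log (exp a) :=
        log_le_log (sub_pos.2 (exp_lt_exp.2 h)) (by linarith [exp_pos b])
    _ = a := log_exp a

lemma sqrt_neg_log_logModulusInv_le {u : ℝ} (hCu : 0 ≤ C / u) (hαu : α < (C / u) ^ (1 / β)) :
    √(-log (logModulusInv C β α u)) ≤ (C / u) ^ (1 / (2 * β)) := by
  have hexp : (C / u) ^ (1 / (2 * β)) = √((C / u) ^ (1 / β)) := by
    rw [sqrt_eq_rpow, ← rpow_mul hCu]
    ring_nf
  rw [hexp, logModulusInv, one_div, log_inv, neg_neg]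
  exact sqrt_le_sqrt (log_exp_sub_exp_le hαu)

lemma integrableOn_const_div_rpow_Ioc {p : ℝ} (hC : 0 ≤ C) (hp : p < 1) (ε : ℝ) :
    IntegrableOn (fun u => (C / u) ^ p) (Ioc 0 ε) := by
  have hpow : IntegrableOn (fun u : ℝ => u ^ (-p)) (Ioc 0 ε) :=
    (intervalIntegral.intervalIntegrable_rpow' (by linarith)).1
  refine IntegrableOn.congr_fun (hpow.const_mul (C ^ p)) (fun u (hu : u ∈ Ioc 0 ε) => ?_)
    measurableSet_Ioc
  rw [div_rpow hC hu.1.le, rpow_neg hu.1.le, div_eq_mul_inv]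

lemma eventually_lt_rpow_const_div (hC : 0 < C) (hβ : 0 < β) :
    ∀ᶠ u in 𝓝[>] 0, α < (C / u) ^ (1 / β) := by
  have hCu : Tendsto (fun u : ℝ => C / u) (𝓝[>] 0) atTop := by
    simpa only [div_eq_mul_inv] using tendsto_inv_nhdsGT_zero.const_mul_atTop hC
  exact ((tendsto_rpow_atTop (one_div_pos.2 hβ)).comp hCu).eventually_gt_atTop α

lemma exists_integrableOn_sqrt_neg_log_logModulusInv (hC : 0 < C) (hβ : 1 / 2 < β) :
    ∃ ε > 0, IntegrableOn (fun u => √(-log (logModulusInv C β α u))) (Ioc 0 ε) := by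
  have hβ0 : 0 < β := by linarith
  obtain ⟨ε, hε, hsub⟩ :=
    mem_nhdsGT_iff_exists_Ioc_subset.1 (eventually_lt_rpow_const_div (α := α) hC hβ0)
  refine ⟨ε, hε, ?_⟩
  have hp : 1 / (2 * β) < 1 := (div_lt_one (by linarith)).2 (by linarith)
  refine (integrableOn_const_div_rpow_Ioc hC.le hp ε).mono' ?_ ?_
  · unfold logModulusInv
    exact (by fun_prop : Measurable _).aestronglyMeasurable
  · refine (ae_restrict_iff' measurableSet_Ioc).2 (ae_of_all _ fun u hu => ?_)
    rw [norm_of_nonneg (sqrt_nonneg _)]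
    exact sqrt_neg_log_logModulusInv_le (div_nonneg hC.le hu.1.le) (hsub hu)

end LogModulus

/-- Remark 3.1, first case: the logarithmic modulus
`σ(h) = C · (ln(e^α + 1/h))^(−β)` with `β > 1/2` is strictly increasing on `(0,∞)`,
tends to `0` at `0+`, has inverse `σ⁻¹(u) = 1/(exp((C/u)^(1/β)) − e^α)` on its range,
and satisfies the entropy-integral condition `∫₀^ε √(−ln σ⁻¹(u)) du < ∞`. -/
theorem log_modulus_entropy_condition (C β α : ℝ) (hC : 0 < C) (hβ : 1 / 2 < β)
    (hα : 0 < α) :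
    StrictMonoOn (fun h : ℝ => C * Real.log (Real.exp α + 1 / h) ^ (-β)) (Set.Ioi 0) ∧
    Tendsto (fun h : ℝ => C * Real.log (Real.exp α + 1 / h) ^ (-β))
      (nhdsWithin 0 (Set.Ioi 0)) (nhds 0) ∧
    (∀ h : ℝ, 0 < h →
      1 / (Real.exp ((C / (C * Real.log (Real.exp α + 1 / h) ^ (-β))) ^ (1 / β)) -
        Real.exp α) = h) ∧
    ∃ ε > (0 : ℝ), MeasureTheory.IntegrableOn
      (fun u : ℝ =>
        Real.sqrt (-Real.log (1 / (Real.exp ((C / u) ^ (1 / β)) - Real.exp α))))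
      (Set.Ioc 0 ε) := by
  have hβ0 : 0 < β := by linarith
  exact ⟨logModulus_strictMonoOn hC hβ0 hα.le, tendsto_logModulus_nhdsGT_zero hβ0,
    fun h hh => logModulusInv_logModulus hC.ne' hβ0.ne' hα.le hh,
    exists_integrableOn_sqrt_neg_log_logModulusInv hC hβ⟩
end
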